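/- arXiv:1902.05626 — 5 statements merged into one kernel-verified Lean document; each statement's English description precedes it below -/
import Mathlib

section
/- Let G act properly discontinuously by homeomorphisms on a locally compact, Hausdorff, second countable space X, with quotient map π : X → X/G, and let μ be a locally finite G-invariant Borel measure on X. Then there exists a unique locally finite Borel measure ν on X/G with the following property: for every well covered open set U/Γ ⊆ X/G, the restriction of ν to U/Γ equals (1/#Γ) times the pushforward of the restricted measure μ|_U under the restricted map π|_U : U → U/Γ. -/
open MeasureTheory Filter Topology Pointwise

set_option linter.unusedSectionVars false
set_option maxHeartbeats 1000000

section LocalPushforwardAux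

variable {X : Type*} [TopologicalSpace X] [MeasurableSpace X]
  {G : Type*} [Group G] [MulAction G X]

local notation "π" => Quotient.mk (MulAction.orbitRel G X)

lemma lp_mk_smul (g : G) (x : X) : π (g • x) = π x :=
  Quotient.sound (MulAction.mem_orbit x g)

lemma lp_measurable_mk : Measurable (π : X → _) := by
  simpa [Quotient.mk''_eq_mk] using
    measurable_quotient_mk'' (s := MulAction.orbitRel G X)

lemma lp_preimage_image (U : Set X) : π ⁻¹' (π '' U) = ⋃ g : G, g • U := by
  ext x
  constructor
  · rintro ⟨u, hu, hux⟩
    obtain ⟨g, rfl⟩ : u ∈ MulAction.orbit G x := Quotient.exact hux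
    exact Set.mem_iUnion.2 ⟨g⁻¹, Set.mem_smul_set_iff_inv_smul_mem.2 (by simpa using hu)⟩
  · rintro hx
    obtain ⟨g, hg⟩ := Set.mem_iUnion.1 hx
    obtain ⟨u, hu, rfl⟩ := hg
    exact ⟨u, hu, (lp_mk_smul g u).symm⟩

lemma lp_preimage_invariant (A : Set (Quotient (MulAction.orbitRel G X))) (g : G) :
    g • (π ⁻¹' A) = π ⁻¹' A := by
  ext x
  rw [Set.mem_smul_set_iff_inv_smul_mem]
  simp [Set.mem_preimage, lp_mk_smul]

variable [ContinuousConstSMul G X] [BorelSpace X]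

lemma lp_isOpen_image {U : Set X} (hU : IsOpen U) : IsOpen (π '' U) := by
  rw [isOpen_coinduced (f := Quotient.mk (MulAction.orbitRel G X))]
  rw [lp_preimage_image]
  exact isOpen_iUnion fun g => hU.smul g

lemma lp_measurableSet_image {U : Set X} (hU : IsOpen U) : MeasurableSet (π '' U) := by
  rw [measurableSet_quotient]
  show MeasurableSet (π ⁻¹' (π '' U))
  rw [lp_preimage_image]
  exact (isOpen_iUnion fun g => hU.smul g).measurableSet

lemma lp_subset_preimage_image (U : Set X) : U ⊆ π ⁻¹' (π '' U) :=
  Set.subset_preimage_image _ _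

variable [LocallyCompactSpace X] [SecondCountableTopology X]

lemma lp_countable_moves
    (hpd : ∀ K L : Set X, IsCompact K → IsCompact L →
      {g : G | ((g • K) ∩ L).Nonempty}.Finite) (U V : Set X) :
    {g : G | ((g • V) ∩ U).Nonempty}.Countable := by
  have hsub : {g : G | ((g • V) ∩ U).Nonempty} ⊆
      ⋃ n : ℕ, {g : G | ((g • compactCovering X n) ∩ compactCovering X n).Nonempty} := by
    rintro g ⟨x, hxV, hxU⟩
    obtain ⟨v, hv, rfl⟩ := hxV
    obtain ⟨n, hn⟩ := exists_mem_compactCovering (g • v)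
    obtain ⟨m, hm⟩ := exists_mem_compactCovering v
    refine Set.mem_iUnion.2 ⟨max n m, ⟨g • v, ?_, compactCovering_subset X (le_max_left n m) hn⟩⟩
    exact Set.smul_mem_smul_set (compactCovering_subset X (le_max_right n m) hm)
  exact Set.Countable.mono hsub <| Set.countable_iUnion fun n =>
    (hpd _ _ (isCompact_compactCovering X n) (isCompact_compactCovering X n)).countable

/-- The basic counting identity: if `S` is contained in the saturation of a well covered
open set `V` with group `Λ`, then `#Λ ⬝ μ S` is the sum of `μ (S ∩ g • V)`. -/
lemma lp_counting
    (hpd : ∀ K L : Set X, IsCompact K → IsCompact L →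
      {g : G | ((g • K) ∩ L).Nonempty}.Finite)
    (μ : Measure X) [SMulInvariantMeasure G X μ]
    (V : Set X) (hV : IsOpen V) (Λ : Subgroup G) (hΛfin : (Λ : Set G).Finite)
    (hΛV : ∀ g ∈ Λ, g • V = V) (hdis : ∀ g : G, g ∉ Λ → (g • V) ∩ V = ∅)
    (S : Set X) (hS : MeasurableSet S) (hSV : S ⊆ π ⁻¹' (π '' V)) :
    (Nat.card Λ : ENNReal) * μ S
      = ∑' g : {g : G | ((g • V) ∩ S).Nonempty}, μ (S ∩ (g : G) • V) := by
  set E := {g : G | ((g • V) ∩ S).Nonempty} with hE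
  haveI : Countable E := (lp_countable_moves hpd S V).to_subtype
  have hmeas : ∀ g : G, MeasurableSet (S ∩ g • V) := fun g => hS.inter (hV.smul g).measurableSet
  have hpoint : ∀ x : X,
      (∑' g : E, (S ∩ (g : G) • V).indicator (1 : X → ENNReal) x)
        = (Nat.card Λ : ENNReal) * S.indicator 1 x := by
    intro x
    by_cases hx : x ∈ S
    · -- find g₀ with x ∈ g₀ • V
      obtain ⟨v, hvV, hvx⟩ := hSV hx
      obtain ⟨h, rfl⟩ : v ∈ MulAction.orbit G x := Quotient.exact hvx
      have hxg₀ : x ∈ h⁻¹ • V := Set.mem_smul_set_iff_inv_smul_mem.2 (by simpa using hvV)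
      set g₀ := h⁻¹ with hg₀
      set C : Set G := {g : G | x ∈ g • V} with hC
      have hCeq : C = (fun γ => g₀ * γ) '' (Λ : Set G) := by
        ext g
        constructor
        · intro hg
          refine ⟨g₀⁻¹ * g, ?_, by group⟩
          by_contra hnot
          have h1 : g₀⁻¹ • x ∈ ((g₀⁻¹ * g) • V) ∩ V := by
            constructor
            · rw [mul_smul]
              exact Set.smul_mem_smul_set hg
            · exact Set.mem_smul_set_iff_inv_smul_mem.1 (by simpa using hxg₀)
          rw [hdis _ hnot] at h1
          exact h1
        · rintro ⟨γ, hγ, rfl⟩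
          show x ∈ (g₀ * γ) • V
          rw [mul_smul, hΛV γ hγ]
          exact hxg₀
      have hCfin : C.Finite := hCeq ▸ hΛfin.image _
      have hCE : C ⊆ E := fun g hg => ⟨x, hg, hx⟩
      have hind : (Set.indicator E (fun g => (S ∩ g • V).indicator (1 : X → ENNReal) x))
          = Set.indicator C (1 : G → ENNReal) := by
        funext g
        by_cases hgC : g ∈ C
        · rw [Set.indicator_of_mem (hCE hgC), Set.indicator_of_mem hgC,
            Set.indicator_of_mem (Set.mem_inter hx hgC)]
          rfl
        · rw [Set.indicator_of_notMem hgC]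
          by_cases hgE : g ∈ E
          · rw [Set.indicator_of_mem hgE, Set.indicator_of_notMem (fun hc => hgC hc.2)]
          · rw [Set.indicator_of_notMem hgE]
      have hcard : Nat.card C = Nat.card Λ := by
        rw [hCeq, Nat.card_coe_set_eq,
          Set.ncard_image_of_injective _ (mul_right_injective g₀),
          ← Nat.card_coe_set_eq]
        simp
      haveI : Fintype C := hCfin.fintype
      calc (∑' g : E, (S ∩ (g : G) • V).indicator (1 : X → ENNReal) x)
          = ∑' g : G, Set.indicator E (fun g => (S ∩ g • V).indicator (1 : X → ENNReal) x) g :=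
            tsum_subtype E (fun g : G => (S ∩ g • V).indicator (1 : X → ENNReal) x)
        _ = ∑' g : G, Set.indicator C (1 : G → ENNReal) g := by rw [hind]
        _ = ∑' g : C, (1 : ENNReal) := (tsum_subtype C _).symm
        _ = (Fintype.card C : ENNReal) := by
            rw [tsum_fintype]; simp
        _ = (Nat.card Λ : ENNReal) * S.indicator 1 x := by
            rw [Set.indicator_of_mem hx, Nat.card_eq_fintype_card.symm, hcard]
            simp
    · have hz : ∀ g : E, (S ∩ (g : G) • V).indicator (1 : X → ENNReal) x = 0 := fun g =>
        Set.indicator_of_notMem (fun hc => hx hc.1) _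
      rw [tsum_congr hz, Set.indicator_of_notMem hx]
      simp
  calc (Nat.card Λ : ENNReal) * μ S
      = ∫⁻ x, (Nat.card Λ : ENNReal) * S.indicator 1 x ∂μ := by
        rw [lintegral_const_mul _ (measurable_one.indicator hS), lintegral_indicator_one hS]
    _ = ∫⁻ x, (∑' g : E, (S ∩ (g : G) • V).indicator (1 : X → ENNReal) x) ∂μ := by
        refine lintegral_congr fun x => (hpoint x).symm
    _ = ∑' g : E, ∫⁻ x, (S ∩ (g : G) • V).indicator (1 : X → ENNReal) x ∂μ :=
        lintegral_tsum fun g => (measurable_one.indicator (hmeas g)).aemeasurable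
    _ = ∑' g : E, μ (S ∩ (g : G) • V) := by
        refine tsum_congr fun g => lintegral_indicator_one (hmeas g)

/-- Compatibility: on a measurable set contained in the images of two well covered open sets,
the two candidate measures agree. -/
lemma lp_compat
    (hpd : ∀ K L : Set X, IsCompact K → IsCompact L →
      {g : G | ((g • K) ∩ L).Nonempty}.Finite)
    (μ : Measure X) [SMulInvariantMeasure G X μ]
    {U V : Set X} {Γ Λ : Subgroup G}
    (hU : IsOpen U) (hΓfin : (Γ : Set G).Finite)
    (hΓU : ∀ g ∈ Γ, g • U = U) (hdisU : ∀ g : G, g ∉ Γ → (g • U) ∩ U = ∅)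
    (hV : IsOpen V) (hΛfin : (Λ : Set G).Finite)
    (hΛV : ∀ g ∈ Λ, g • V = V) (hdisV : ∀ g : G, g ∉ Λ → (g • V) ∩ V = ∅)
    {A : Set (Quotient (MulAction.orbitRel G X))} (hA : MeasurableSet A)
    (hAU : A ⊆ π '' U) (hAV : A ⊆ π '' V) :
    (Nat.card Γ : ENNReal)⁻¹ * μ (π ⁻¹' A ∩ U)
      = (Nat.card Λ : ENNReal)⁻¹ * μ (π ⁻¹' A ∩ V) := by
  set W : Set X := π ⁻¹' A with hW
  have hWmeas : MeasurableSet W := lp_measurable_mk hA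
  have hWinv : ∀ g : G, g • W = W := lp_preimage_invariant A
  have h1 : (Nat.card Λ : ENNReal) * μ (W ∩ U)
      = ∑' g : {g : G | ((g • V) ∩ (W ∩ U)).Nonempty}, μ ((W ∩ U) ∩ (g : G) • V) :=
    lp_counting hpd μ V hV Λ hΛfin hΛV hdisV (W ∩ U) (hWmeas.inter hU.measurableSet)
      (Set.Subset.trans Set.inter_subset_left (Set.preimage_mono hAV))
  have h2 : (Nat.card Γ : ENNReal) * μ (W ∩ V)
      = ∑' g : {g : G | ((g • U) ∩ (W ∩ V)).Nonempty}, μ ((W ∩ V) ∩ (g : G) • U) :=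
    lp_counting hpd μ U hU Γ hΓfin hΓU hdisU (W ∩ V) (hWmeas.inter hV.measurableSet)
      (Set.Subset.trans Set.inter_subset_left (Set.preimage_mono hAU))
  have hterm : ∀ g : G, μ ((W ∩ U) ∩ g • V) = μ ((W ∩ V) ∩ g⁻¹ • U) := by
    intro g
    calc μ ((W ∩ U) ∩ g • V) = μ (g⁻¹ • ((W ∩ U) ∩ g • V)) := (measure_smul μ g⁻¹ _).symm
      _ = μ ((W ∩ V) ∩ g⁻¹ • U) := by
          rw [Set.smul_set_inter, Set.smul_set_inter, hWinv g⁻¹, inv_smul_smul]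
          rw [Set.inter_assoc, Set.inter_comm (g⁻¹ • U), ← Set.inter_assoc]
  have hmemiff : ∀ g : G, ((g • V) ∩ (W ∩ U)).Nonempty ↔ ((g⁻¹ • U) ∩ (W ∩ V)).Nonempty := by
    intro g
    constructor
    · rintro ⟨x, hxV, hxW, hxU⟩
      refine ⟨g⁻¹ • x, Set.smul_mem_smul_set hxU, ?_, ?_⟩
      · rw [← hWinv g⁻¹]; exact Set.smul_mem_smul_set hxW
      · obtain ⟨v, hv, rfl⟩ := hxV; simpa using hv
    · rintro ⟨x, hxU, hxW, hxV⟩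
      refine ⟨g • x, Set.smul_mem_smul_set hxV, ?_, ?_⟩
      · rw [← hWinv g]; exact Set.smul_mem_smul_set hxW
      · obtain ⟨u, hu, rfl⟩ := hxU; simpa [smul_smul] using hu
  let e : {g : G | ((g • V) ∩ (W ∩ U)).Nonempty} ≃ {g : G | ((g • U) ∩ (W ∩ V)).Nonempty} :=
    { toFun := fun g => ⟨(g : G)⁻¹, (hmemiff g).1 g.2⟩
      invFun := fun g => ⟨(g : G)⁻¹, (hmemiff (g : G)⁻¹).2 (by rw [inv_inv]; exact g.2)⟩
      left_inv := fun g => by simp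
      right_inv := fun g => by simp }
  have hsum : (∑' g : {g : G | ((g • V) ∩ (W ∩ U)).Nonempty}, μ ((W ∩ U) ∩ (g : G) • V))
      = ∑' g : {g : G | ((g • U) ∩ (W ∩ V)).Nonempty}, μ ((W ∩ V) ∩ (g : G) • U) := by
    rw [← Equiv.tsum_eq e (fun g => μ ((W ∩ V) ∩ (g : G) • U))]
    exact tsum_congr fun g => hterm g
  have hmain : (Nat.card Λ : ENNReal) * μ (W ∩ U) = (Nat.card Γ : ENNReal) * μ (W ∩ V) := by
    rw [h1, hsum, ← h2]
  haveI : Finite Γ := hΓfin.to_subtype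
  haveI : Finite Λ := hΛfin.to_subtype
  have hΓ0 : (Nat.card Γ : ENNReal) ≠ 0 := by simp [Nat.card_pos.ne']
  have hΛ0 : (Nat.card Λ : ENNReal) ≠ 0 := by simp [Nat.card_pos.ne']
  have hΓt : (Nat.card Γ : ENNReal) ≠ ⊤ := ENNReal.natCast_ne_top _
  have hΛt : (Nat.card Λ : ENNReal) ≠ ⊤ := ENNReal.natCast_ne_top _
  have hΛc : ∀ a : ENNReal, (Nat.card Λ : ENNReal)⁻¹ * ((Nat.card Λ : ENNReal) * a) = a :=
    fun a => by rw [← mul_assoc, ENNReal.inv_mul_cancel hΛ0 hΛt, one_mul]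
  have hΓc : ∀ a : ENNReal, (Nat.card Γ : ENNReal)⁻¹ * ((Nat.card Γ : ENNReal) * a) = a :=
    fun a => by rw [← mul_assoc, ENNReal.inv_mul_cancel hΓ0 hΓt, one_mul]
  calc (Nat.card Γ : ENNReal)⁻¹ * μ (W ∩ U)
      = (Nat.card Γ : ENNReal)⁻¹ * ((Nat.card Λ : ENNReal)⁻¹
          * ((Nat.card Λ : ENNReal) * μ (W ∩ U))) := by rw [hΛc]
    _ = (Nat.card Λ : ENNReal)⁻¹ * ((Nat.card Γ : ENNReal)⁻¹
          * ((Nat.card Γ : ENNReal) * μ (W ∩ V))) := by rw [hmain]; ring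
    _ = (Nat.card Λ : ENNReal)⁻¹ * μ (W ∩ V) := by rw [hΓc]

variable [T2Space X]

/-- Every point has a well covered neighbourhood of finite measure. -/
lemma lp_exists_wc
    (hpd : ∀ K L : Set X, IsCompact K → IsCompact L →
      {g : G | ((g • K) ∩ L).Nonempty}.Finite)
    (μ : Measure X) [IsLocallyFiniteMeasure μ] (x : X) :
    ∃ (U : Set X) (Γ : Subgroup G), x ∈ U ∧ IsOpen U ∧ (Γ : Set G).Finite ∧
      (∀ g ∈ Γ, g • U = U) ∧ (∀ g : G, g ∉ Γ → (g • U) ∩ U = ∅) ∧ μ U < ⊤ := by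
  obtain ⟨K, hKcomp, hKnhds⟩ := exists_compact_mem_nhds x
  obtain ⟨O, hxO, hOopen, hOfin⟩ := μ.exists_isOpen_measure_lt_top x
  set Γ : Subgroup G := MulAction.stabilizer G x with hΓ
  have hΓfin : (Γ : Set G).Finite := by
    refine (hpd {x} {x} isCompact_singleton isCompact_singleton).subset ?_
    intro g hg
    exact ⟨x, by rw [Set.smul_set_singleton, hg]; exact rfl, rfl⟩
  set F : Set G := {g : G | ((g • K) ∩ K).Nonempty} \ (Γ : Set G) with hF
  have hFfin : F.Finite := (hpd K K hKcomp hKcomp).diff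
  have hsep : ∀ g : G, ∃ Wg : Set X, IsOpen Wg ∧ x ∈ Wg ∧ (g ∈ F → (g • Wg) ∩ Wg = ∅) := by
    intro g
    by_cases hg : g ∈ F
    · have hgx : g • x ≠ x := by
        intro h
        exact hg.2 h
      obtain ⟨B, A, hBopen, hAopen, hgB, hxA, hdisj⟩ := t2_separation hgx
      refine ⟨A ∩ (g • ·) ⁻¹' B, hAopen.inter (hBopen.preimage (continuous_const_smul g)),
        ⟨hxA, hgB⟩, fun _ => ?_⟩
      rw [Set.eq_empty_iff_forall_notMem]
      rintro y ⟨⟨z, ⟨_, hzB⟩, rfl⟩, hyA, _⟩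
      exact Set.disjoint_left.1 hdisj hzB hyA
    · exact ⟨Set.univ, isOpen_univ, trivial, fun h => absurd h hg⟩
  choose W hWopen hWx hWdis using hsep
  set V : Set X := interior K ∩ O ∩ ⋂ g ∈ F, W g with hV
  have hVopen : IsOpen V :=
    (isOpen_interior.inter hOopen).inter (hFfin.isOpen_biInter fun g _ => hWopen g)
  have hxV : x ∈ V :=
    ⟨⟨mem_interior_iff_mem_nhds.2 hKnhds, hxO⟩, Set.mem_biInter fun g _ => hWx g⟩
  have hVK : V ⊆ K := fun y hy => interior_subset hy.1.1
  have hVO : V ⊆ O := fun y hy => hy.1.2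
  have hVdis : ∀ g : G, g ∉ Γ → (g • V) ∩ V = ∅ := by
    intro g hg
    by_cases hgF : g ∈ F
    · have hVW : V ⊆ W g := fun y hy => Set.mem_iInter₂.mp hy.2 g hgF
      have : (g • V) ∩ V ⊆ (g • W g) ∩ W g :=
        Set.inter_subset_inter (Set.smul_set_mono hVW) hVW
      rw [hWdis g hgF] at this
      exact Set.eq_empty_of_subset_empty this
    · have hgK : ¬((g • K) ∩ K).Nonempty := fun h => hgF ⟨h, hg⟩
      have : (g • V) ∩ V ⊆ (g • K) ∩ K :=
        Set.inter_subset_inter (Set.smul_set_mono hVK) hVK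
      rw [Set.not_nonempty_iff_eq_empty.1 hgK] at this
      exact Set.eq_empty_of_subset_empty this
  set U : Set X := ⋂ γ ∈ (Γ : Set G), γ • V with hUdef
  have hxU : x ∈ U := Set.mem_biInter fun γ hγ => by
    rw [Set.mem_smul_set_iff_inv_smul_mem]
    have : γ⁻¹ • x = x := MulAction.mem_stabilizer_iff.1 (Γ.inv_mem hγ)
    rw [this]; exact hxV
  have hUopen : IsOpen U := hΓfin.isOpen_biInter fun γ _ => hVopen.smul γ
  have hUV : U ⊆ V := by
    intro y hy
    have := Set.mem_iInter₂.mp hy 1 Γ.one_mem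
    simpa using this
  have hmemU : ∀ y : X, y ∈ U ↔ ∀ γ ∈ Γ, y ∈ γ • V := fun y => Set.mem_iInter₂
  have hΓU : ∀ γ ∈ Γ, γ • U = U := by
    intro γ hγ
    ext y
    rw [Set.mem_smul_set_iff_inv_smul_mem, hmemU, hmemU]
    constructor
    · intro h δ hδ
      have h1 := h (γ⁻¹ * δ) (Γ.mul_mem (Γ.inv_mem hγ) hδ)
      rw [Set.mem_smul_set_iff_inv_smul_mem] at h1 ⊢
      rw [← mul_smul] at h1
      have he : (γ⁻¹ * δ)⁻¹ * γ⁻¹ = δ⁻¹ := by group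
      rwa [he] at h1
    · intro h δ hδ
      have h1 := h (γ * δ) (Γ.mul_mem hγ hδ)
      rw [Set.mem_smul_set_iff_inv_smul_mem] at h1 ⊢
      rw [← mul_smul]
      have he : δ⁻¹ * γ⁻¹ = (γ * δ)⁻¹ := by group
      rwa [he]
  refine ⟨U, Γ, hxU, hUopen, hΓfin, hΓU, fun g hg => ?_, ?_⟩
  · have : (g • U) ∩ U ⊆ (g • V) ∩ V :=
      Set.inter_subset_inter (Set.smul_set_mono hUV) hUV
    rw [hVdis g hg] at this
    exact Set.eq_empty_of_subset_empty this
  · exact lt_of_le_of_lt (measure_mono (hUV.trans hVO)) hOfin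

/-- A countable well covered cover of the quotient. -/
lemma lp_exists_cover
    (hpd : ∀ K L : Set X, IsCompact K → IsCompact L →
      {g : G | ((g • K) ∩ L).Nonempty}.Finite)
    (μ : Measure X) [IsLocallyFiniteMeasure μ] :
    ∃ (Us : ℕ → Set X) (Γs : ℕ → Subgroup G),
      (∀ n, IsOpen (Us n)) ∧ (∀ n, ((Γs n : Set G)).Finite) ∧
      (∀ n, ∀ g ∈ Γs n, g • Us n = Us n) ∧
      (∀ n, ∀ g : G, g ∉ Γs n → (g • Us n) ∩ (Us n) = ∅) ∧
      (∀ n, μ (Us n) < ⊤) ∧ (⋃ n, π '' (Us n)) = Set.univ := by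
  choose U Γ hx hopen hfin hinv hdis hμfin using lp_exists_wc hpd μ
  have hopen' : ∀ x : X, IsOpen (π ⁻¹' (π '' (U x))) := by
    intro x
    rw [lp_preimage_image]
    exact isOpen_iUnion fun g => (hopen x).smul g
  obtain ⟨T, hTc, hTeq⟩ :=
    TopologicalSpace.isOpen_iUnion_countable (fun x => π ⁻¹' (π '' (U x))) hopen'
  have huniv : ⋃ x ∈ T, π ⁻¹' (π '' (U x)) = Set.univ := by
    rw [hTeq]
    ext y
    simp only [Set.mem_iUnion, Set.mem_univ, iff_true]
    exact ⟨y, lp_subset_preimage_image (U y) (hx y)⟩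
  by_cases hTne : T.Nonempty
  · obtain ⟨f, hf⟩ := hTc.exists_eq_range hTne
    refine ⟨fun n => U (f n), fun n => Γ (f n), fun n => hopen _, fun n => hfin _,
      fun n => hinv _, fun n => hdis _, fun n => hμfin _, ?_⟩
    ext q
    simp only [Set.mem_iUnion, Set.mem_univ, iff_true]
    obtain ⟨y, rfl⟩ := Quot.mk_surjective q
    have : (y : X) ∈ ⋃ x ∈ T, π ⁻¹' (π '' (U x)) := huniv ▸ Set.mem_univ y
    obtain ⟨x, hxT, hyx⟩ := Set.mem_iUnion₂.1 this
    rw [hf] at hxT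
    obtain ⟨n, rfl⟩ := hxT
    exact ⟨n, hyx⟩
  · have hX : IsEmpty X := by
      rw [Set.not_nonempty_iff_eq_empty] at hTne
      constructor
      intro y
      have : y ∈ ⋃ x ∈ T, π ⁻¹' (π '' (U x)) := huniv ▸ Set.mem_univ y
      rw [hTne] at this
      simpa using this
    haveI : IsEmpty (Quotient (MulAction.orbitRel G X)) :=
      ⟨fun q => Quotient.inductionOn q fun y => hX.elim y⟩
    refine ⟨fun _ => ∅, fun _ => ⊥, fun n => isOpen_empty,
      fun n => by simp, fun n g _ => by simp, fun n g _ => by simp,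
      fun n => by simp, ?_⟩
    simp [Set.eq_empty_of_isEmpty]

end LocalPushforwardAux

/-- `ν` is a local pushforward of `μ` under the quotient map `X → X/G`: it is locally finite,
and for every well covered open set `U/Γ` (i.e. `U ⊆ X` open, `Γ ≤ G` a finite subgroup with
`g • U = U` for `g ∈ Γ` and `g • U ∩ U = ∅` for `g ∉ Γ`), the restriction of `ν` to the image
of `U` equals `(1/#Γ)` times the pushforward of `μ|_U` under the quotient map. -/
def IsLocalPushforward {X : Type*} [TopologicalSpace X] [MeasurableSpace X]
    {G : Type*} [Group G] [MulAction G X]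
    (μ : Measure X) (ν : Measure (Quotient (MulAction.orbitRel G X))) : Prop :=
  IsLocallyFiniteMeasure ν ∧
    ∀ (U : Set X) (Γ : Subgroup G), IsOpen U → (Γ : Set G).Finite →
      (∀ g ∈ Γ, g • U = U) → (∀ g : G, g ∉ Γ → (g • U) ∩ U = ∅) →
      ν.restrict (Quotient.mk (MulAction.orbitRel G X) '' U) =
        (Nat.card Γ : ENNReal)⁻¹ • (μ.restrict U).map (Quotient.mk (MulAction.orbitRel G X))

/-- For a properly discontinuous action by homeomorphisms of `G` on a locally
compact, Hausdorff, second countable space `X` and a locally finite `G`-invariant Borel measure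
`μ` on `X`, there is a unique locally finite Borel measure `ν` on `X/G` whose restriction to
every well covered open set `U/Γ` equals `(1/#Γ)` times the pushforward of `μ|_U` under the
quotient map. -/
theorem stmt_2 {X : Type*} [TopologicalSpace X] [LocallyCompactSpace X] [T2Space X]
    [SecondCountableTopology X] [MeasurableSpace X] [BorelSpace X]
    {G : Type*} [Group G] [MulAction G X] [ContinuousConstSMul G X]
    (hpd : ∀ K L : Set X, IsCompact K → IsCompact L →
      {g : G | ((g • K) ∩ L).Nonempty}.Finite)
    (μ : Measure X) [IsLocallyFiniteMeasure μ] [SMulInvariantMeasure G X μ] :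
    ∃! ν : Measure (Quotient (MulAction.orbitRel G X)), IsLocalPushforward μ ν := by
  classical
  set π : X → Quotient (MulAction.orbitRel G X) := Quotient.mk (MulAction.orbitRel G X) with hπ
  obtain ⟨Us, Γs, hUso, hΓsfin, hΓsU, hUsdis, hUsfin, hcov⟩ := lp_exists_cover hpd μ
  set B : ℕ → Set (Quotient (MulAction.orbitRel G X)) := fun n => π '' Us n with hB
  have hBmeas : ∀ n, MeasurableSet (B n) := fun n => lp_measurableSet_image (hUso n)
  set T : ℕ → Set (Quotient (MulAction.orbitRel G X)) := disjointed B with hT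
  have hTmeas : ∀ n, MeasurableSet (T n) := MeasurableSet.disjointed hBmeas
  have hTdis : Pairwise (Function.onFun Disjoint T) := disjoint_disjointed B
  have hTsub : ∀ n, T n ⊆ B n := fun n => disjointed_le B n
  have hTunion : ⋃ n, T n = Set.univ := by rw [hT, iUnion_disjointed, ← hB] at *; rw [hcov]
  -- the candidate local measures
  set cand : Set X → Subgroup G → Measure (Quotient (MulAction.orbitRel G X)) :=
    fun U Γ => (Nat.card Γ : ENNReal)⁻¹ • (μ.restrict U).map π with hcand
  have hcand_apply : ∀ (U : Set X) (Γ : Subgroup G) (A : Set (Quotient (MulAction.orbitRel G X))),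
      MeasurableSet U → MeasurableSet A →
      cand U Γ A = (Nat.card Γ : ENNReal)⁻¹ * μ (π ⁻¹' A ∩ U) := by
    intro U Γ A hU hA
    rw [hcand]
    simp only [Measure.smul_apply, smul_eq_mul]
    rw [Measure.map_apply lp_measurable_mk hA, Measure.restrict_apply (lp_measurable_mk hA)]
  set ν : Measure (Quotient (MulAction.orbitRel G X)) :=
    Measure.sum (fun n => (cand (Us n) (Γs n)).restrict (T n)) with hν
  have hν_apply : ∀ A, MeasurableSet A → ν A = ∑' n, cand (Us n) (Γs n) (A ∩ T n) := by
    intro A hA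
    rw [hν, Measure.sum_apply _ hA]
    exact tsum_congr fun n => Measure.restrict_apply hA
  -- the key local computation
  have hkey : ∀ (U : Set X) (Γ : Subgroup G), IsOpen U → (Γ : Set G).Finite →
      (∀ g ∈ Γ, g • U = U) → (∀ g : G, g ∉ Γ → (g • U) ∩ U = ∅) →
      ∀ A, MeasurableSet A →
        ν (A ∩ π '' U) = (Nat.card Γ : ENNReal)⁻¹ * μ (π ⁻¹' A ∩ U) := by
    intro U Γ hUo hΓfin hΓU hUdis A hA
    have hAU : MeasurableSet (A ∩ π '' U) := hA.inter (lp_measurableSet_image hUo)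
    rw [hν_apply _ hAU]
    have hterm : ∀ n, cand (Us n) (Γs n) (A ∩ π '' U ∩ T n)
        = (Nat.card Γ : ENNReal)⁻¹ * μ (π ⁻¹' (A ∩ π '' U ∩ T n) ∩ U) := by
      intro n
      have hSmeas : MeasurableSet (A ∩ π '' U ∩ T n) := hAU.inter (hTmeas n)
      rw [hcand_apply _ _ _ (hUso n).measurableSet hSmeas]
      exact lp_compat hpd μ (hUso n) (hΓsfin n) (hΓsU n) (hUsdis n) hUo hΓfin hΓU hUdis
        hSmeas (fun q hq => hTsub n hq.2) (fun q hq => hq.1.2)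
    rw [tsum_congr hterm, ENNReal.tsum_mul_left]
    congr 1
    have hdisj : Pairwise (Function.onFun Disjoint fun n => π ⁻¹' (A ∩ π '' U ∩ T n) ∩ U) := by
      intro m n hmn
      refine Set.disjoint_left.2 fun q hqm hqn => ?_
      exact Set.disjoint_left.1 (hTdis hmn) hqm.1.2 hqn.1.2
    have hmeas' : ∀ n, MeasurableSet (π ⁻¹' (A ∩ π '' U ∩ T n) ∩ U) := fun n =>
      (lp_measurable_mk ((hA.inter (lp_measurableSet_image hUo)).inter (hTmeas n))).inter
        hUo.measurableSet
    rw [← measure_iUnion hdisj hmeas']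
    congr 1
    rw [← Set.iUnion_inter, ← Set.preimage_iUnion, ← Set.inter_iUnion, hTunion,
      Set.inter_univ, Set.preimage_inter]
    have : π ⁻¹' (π '' U) ∩ U = U :=
      Set.inter_eq_self_of_subset_right (lp_subset_preimage_image U)
    rw [Set.inter_assoc, this]
  -- the restriction property for ν
  have hrestrict : ∀ (U : Set X) (Γ : Subgroup G), IsOpen U → (Γ : Set G).Finite →
      (∀ g ∈ Γ, g • U = U) → (∀ g : G, g ∉ Γ → (g • U) ∩ U = ∅) →
      ν.restrict (π '' U) = cand U Γ := by
    intro U Γ hUo hΓfin hΓU hUdis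
    refine Measure.ext fun A hA => ?_
    rw [Measure.restrict_apply hA, hkey U Γ hUo hΓfin hΓU hUdis A hA,
      hcand_apply U Γ A hUo.measurableSet hA]
  -- local finiteness of ν
  have hνfin : IsLocallyFiniteMeasure ν := by
    constructor
    intro q
    obtain ⟨y, rfl⟩ := Quot.mk_surjective q
    obtain ⟨U, Γ, hyU, hUo, hΓfin, hΓU, hUdis, hμU⟩ := lp_exists_wc hpd μ y
    refine ⟨π '' U, (lp_isOpen_image hUo).mem_nhds ⟨y, hyU, rfl⟩, ?_⟩
    have := hkey U Γ hUo hΓfin hΓU hUdis Set.univ MeasurableSet.univ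
    rw [Set.univ_inter, Set.preimage_univ, Set.univ_inter] at this
    rw [this]
    haveI : Finite Γ := hΓfin.to_subtype
    calc (Nat.card Γ : ENNReal)⁻¹ * μ U ≤ 1 * μ U := by
          refine mul_le_mul_left ?_ _
          refine ENNReal.inv_le_one.2 ?_
          exact_mod_cast Nat.one_le_iff_ne_zero.2 Nat.card_pos.ne'
      _ = μ U := one_mul _
      _ < ⊤ := hμU
  refine ⟨ν, ⟨hνfin, fun U Γ hUo hΓfin hΓU hUdis => hrestrict U Γ hUo hΓfin hΓU hUdis⟩, ?_⟩
  -- uniqueness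
  rintro ν' ⟨hν'fin, hν'prop⟩
  refine Measure.ext fun A hA => ?_
  have hsplit : ∀ (ρ : Measure (Quotient (MulAction.orbitRel G X))),
      ρ A = ∑' n, ρ (A ∩ T n) := by
    intro ρ
    have : A = ⋃ n, A ∩ T n := by
      rw [← Set.inter_iUnion, hTunion, Set.inter_univ]
    conv_lhs => rw [this]
    refine measure_iUnion ?_ (fun n => hA.inter (hTmeas n))
    intro m n hmn
    refine Set.disjoint_left.2 fun q hqm hqn => ?_
    exact Set.disjoint_left.1 (hTdis hmn) hqm.2 hqn.2
  rw [hsplit ν', hsplit ν]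
  refine tsum_congr fun n => ?_
  have hATn : MeasurableSet (A ∩ T n) := hA.inter (hTmeas n)
  have hsub : A ∩ T n ⊆ π '' Us n := fun q hq => hTsub n hq.2
  have h1 : ν' (A ∩ T n) = cand (Us n) (Γs n) (A ∩ T n) := by
    have hp := hν'prop (Us n) (Γs n) (hUso n) (hΓsfin n) (hΓsU n) (hUsdis n)
    rw [← hπ] at hp
    have hre : ν' (A ∩ T n) = ν'.restrict (π '' Us n) (A ∩ T n) := by
      rw [Measure.restrict_apply hATn, Set.inter_eq_self_of_subset_left hsub]
    rw [hre, hp]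
  have h2 : ν (A ∩ T n) = cand (Us n) (Γs n) (A ∩ T n) := by
    rw [← hrestrict (Us n) (Γs n) (hUso n) (hΓsfin n) (hΓsU n) (hUsdis n)]
    rw [Measure.restrict_apply hATn, Set.inter_eq_self_of_subset_left hsub]
  rw [h1, h2]
end

section
/- Let G act properly discontinuously by homeomorphisms on a locally compact, Hausdorff, second countable space X, with quotient map π : X → X/G. Let A ⊆ X be a G-invariant, closed, discrete subset and let w : A → ℝ≥0 be a G-invariant function such that the measure μ = Σ_{x ∈ A} w(x)·δ_x is locally finite. Then the local pushforward of μ is given by π_*μ = Σ_{[x] ∈ A/G} (w(x)/#Stab(x))·δ_{[x]}, where the sum ranges over the G-orbits of points of A, Stab(x) = {g ∈ G : g·x = x}, and δ denotes a Dirac point mass. -/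
open MeasureTheory Filter Topology Pointwise

section Aux

private lemma aux_tsum_indicator_count {α : Type*} {s t : Set α} (h : (s ∩ t).Finite) :
    ∑' (x : s), t.indicator (fun _ => (1 : ENNReal)) ↑x = (Nat.card ↥(s ∩ t) : ENNReal) := by
  classical
  have h1 : ∀ x : s, t.indicator (fun _ => (1 : ENNReal)) ↑x
      = (s ∩ t).indicator (fun _ => (1 : ENNReal)) ↑x := by
    intro x
    by_cases hx : (x : α) ∈ t
    · rw [Set.indicator_of_mem hx,
        Set.indicator_of_mem (show (x : α) ∈ s ∩ t from ⟨x.2, hx⟩)]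
    · rw [Set.indicator_of_notMem hx, Set.indicator_of_notMem (fun hc => hx hc.2)]
  rw [tsum_congr h1, tsum_subtype s ((s ∩ t).indicator fun _ => (1 : ENNReal)),
    Set.indicator_indicator, Set.inter_eq_self_of_subset_right Set.inter_subset_left]
  rw [tsum_eq_sum (s := h.toFinset)
    (fun x hx => Set.indicator_of_notMem (fun hc => hx (h.mem_toFinset.2 hc)) _)]
  rw [Finset.sum_congr rfl (fun x hx => Set.indicator_of_mem (h.mem_toFinset.1 hx) _)]
  rw [Finset.sum_const, nsmul_eq_mul, mul_one, Nat.card_coe_set_eq,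
    Set.ncard_eq_toFinset_card _ h]

private lemma aux_orbit_inter_count {X G : Type*} [Group G] [MulAction G X]
    {U : Set X} {Γ : Subgroup G} (hfin : (Γ : Set G).Finite)
    (hinv : ∀ g ∈ Γ, g • U = U) (hdisj : ∀ g : G, g ∉ Γ → (g • U) ∩ U = ∅)
    {y : X} (hy : y ∈ U) :
    Nat.card ↥(MulAction.orbit G y ∩ U) * Nat.card (MulAction.stabilizer G y)
      = Nat.card Γ := by
  classical
  have hmemΓ : ∀ g : G, g • y ∈ U → g ∈ Γ := by
    intro g hg
    by_contra hgn
    have h1 : g • y ∈ (g • U) ∩ U := ⟨Set.smul_mem_smul_set hy, hg⟩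
    rw [hdisj g hgn] at h1
    exact h1
  have hset : MulAction.orbit G y ∩ U = MulAction.orbit Γ y := by
    ext z
    constructor
    · rintro ⟨⟨g, rfl⟩, hzU⟩
      exact ⟨⟨g, hmemΓ g hzU⟩, rfl⟩
    · rintro ⟨⟨g, hg⟩, rfl⟩
      refine ⟨⟨g, rfl⟩, ?_⟩
      show g • y ∈ U
      rw [← hinv g hg]
      exact Set.smul_mem_smul_set hy
  have h2 : Nat.card (MulAction.stabilizer Γ y) = Nat.card (MulAction.stabilizer G y) := by
    refine Nat.card_congr
      (⟨fun g => ⟨((g : Γ) : G), g.2⟩,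
       fun g => ⟨⟨(g : G), hmemΓ _ (by rw [show (g : G) • y = y from g.2]; exact hy)⟩, g.2⟩,
       fun g => rfl, fun g => rfl⟩ :
        MulAction.stabilizer Γ y ≃ MulAction.stabilizer G y)
  rw [hset, ← h2, ← Nat.card_prod]
  exact Nat.card_congr (MulAction.orbitProdStabilizerEquivGroup Γ y)

end Aux

/-- Let `G` act properly discontinuously on a locally compact, Hausdorff,
second countable space `X`, let `A ⊆ X` be a `G`-invariant closed discrete subset and
`w : A → ℝ≥0` a `G`-invariant weight function (given here as a `G`-invariant function on `X`)
such that `μ = ∑_{x ∈ A} w(x) δ_x` is locally finite. Then the local pushforward of `μ` is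
`∑_{[x] ∈ A/G} (w(x)/#Stab(x)) δ_{[x]}`, where the sum ranges over the orbits of points of `A`,
represented via a choice function `r`. -/
theorem stmt_3 {X : Type*} [TopologicalSpace X] [LocallyCompactSpace X] [T2Space X]
    [SecondCountableTopology X] [MeasurableSpace X] [BorelSpace X]
    {G : Type*} [Group G] [MulAction G X] [ContinuousConstSMul G X]
    (hpd : ∀ K L : Set X, IsCompact K → IsCompact L →
      {g : G | ((g • K) ∩ L).Nonempty}.Finite)
    (A : Set X) (hAinv : ∀ g : G, g • A = A) (hAclosed : IsClosed A)
    (hAdiscrete : DiscreteTopology A)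
    (w : X → NNReal) (hw : ∀ (g : G) (x : X), w (g • x) = w x)
    (μ : Measure X)
    (hμ : μ = Measure.sum (fun x : A => (w (x : X) : ENNReal) • Measure.dirac (x : X)))
    (hlf : IsLocallyFiniteMeasure μ)
    (r : Quotient (MulAction.orbitRel G X) → X)
    (hr : ∀ q ∈ Quotient.mk (MulAction.orbitRel G X) '' A,
      r q ∈ A ∧ Quotient.mk (MulAction.orbitRel G X) (r q) = q) :
    IsLocalPushforward μ
      (Measure.sum
        (fun q : (Quotient.mk (MulAction.orbitRel G X) '' A : Set _) =>
          ((w (r (q : Quotient (MulAction.orbitRel G X))) : ENNReal) /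
              (Nat.card (MulAction.stabilizer G (r (q : Quotient (MulAction.orbitRel G X)))) :
                ENNReal)) •
            Measure.dirac (q : Quotient (MulAction.orbitRel G X)))) := by
  classical
  set pr : X → Quotient (MulAction.orbitRel G X) := Quotient.mk (MulAction.orbitRel G X) with hpr
  have hprmeas : Measurable pr := measurable_quotient_mk''
  -- basic facts
  have hQeq : ∀ {a b : X}, pr a = pr b → a ∈ MulAction.orbit G b := by
    intro a b h
    rw [← MulAction.orbitRel_apply]
    exact Quotient.exact h
  have hQeq' : ∀ {a b : X}, a ∈ MulAction.orbit G b → pr a = pr b := by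
    intro a b h
    exact Quotient.sound (MulAction.orbitRel_apply.2 h)
  have hworbit : ∀ {a b : X}, a ∈ MulAction.orbit G b → w a = w b := by
    rintro a b ⟨g, rfl⟩
    exact hw g b
  have hAorbit : ∀ {a b : X}, b ∈ A → a ∈ MulAction.orbit G b → a ∈ A := by
    rintro a b hb ⟨g, rfl⟩
    rw [← hAinv g]
    exact Set.smul_mem_smul_set hb
  have hstabfin : ∀ x : X, Finite (MulAction.stabilizer G x) := by
    intro x
    have h := hpd {x} {x} isCompact_singleton isCompact_singleton
    have hsub : ((MulAction.stabilizer G x) : Set G)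
        ⊆ {g : G | ((g • ({x} : Set X)) ∩ ({x} : Set X)).Nonempty} := by
      intro g hg
      refine ⟨x, ?_, rfl⟩
      rw [Set.smul_set_singleton, show g • x = x from hg]
      exact rfl
    exact (h.subset hsub).to_subtype
  have hstabpos : ∀ x : X, 0 < Nat.card (MulAction.stabilizer G x) := by
    intro x
    haveI := hstabfin x
    exact Nat.card_pos
  have himg_open : ∀ {V : Set X}, IsOpen V → IsOpen (pr '' V) := by
    intro V hV
    exact isOpenMap_quotient_mk'_mul V hV
  have hpreim : ∀ V : Set X, pr ⁻¹' (pr '' V) = ⋃ g : G, g • V := by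
    intro V
    ext z
    constructor
    · rintro ⟨u, huU, hu⟩
      obtain ⟨g, hg⟩ := hQeq hu
      have hg' : g • z = u := hg
      exact Set.mem_iUnion.2 ⟨g⁻¹, ⟨u, huU, show g⁻¹ • u = z by rw [← hg', inv_smul_smul]⟩⟩
    · intro hz
      obtain ⟨g, u, huU, rfl⟩ := Set.mem_iUnion.1 hz
      exact ⟨u, huU, (hQeq' ⟨g, rfl⟩).symm⟩
  have himg_meas : ∀ {V : Set X}, IsOpen V → MeasurableSet (pr '' V) := by
    intro V hV
    refine measurableSet_quotient.2 ?_
    show MeasurableSet (pr ⁻¹' (pr '' V))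
    rw [hpreim V]
    exact (isOpen_iUnion fun g => hV.smul g).measurableSet
  constructor
  · -- local finiteness
    refine ⟨fun q => ?_⟩
    obtain ⟨x, hx⟩ := Quotient.exists_rep q
    obtain ⟨W, hWmem, hWfin⟩ := hlf.finiteAtNhds x
    set V : Set (Quotient (MulAction.orbitRel G X)) := pr '' (interior W) with hV
    have hVopen : IsOpen V := himg_open isOpen_interior
    have hVmeas : MeasurableSet V := himg_meas isOpen_interior
    have hqV : q ∈ V := ⟨x, mem_interior_iff_mem_nhds.2 hWmem, hx⟩
    refine ⟨V, hVopen.mem_nhds hqV, ?_⟩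
    have hWmeas : MeasurableSet (interior W) := isOpen_interior.measurableSet
    -- compute ν V
    rw [Measure.sum_apply _ hVmeas]
    have hle : (∑' (q' : (pr '' A : Set _)),
        (((w (r ↑q') : ENNReal) / (Nat.card (MulAction.stabilizer G (r ↑q')) : ENNReal)) •
          Measure.dirac (↑q' : Quotient (MulAction.orbitRel G X))) V)
        ≤ μ (interior W) := by
      have hμW : μ (interior W) = ∑' (x' : A),
          (w (x' : X) : ENNReal) * (interior W).indicator (fun _ => (1:ENNReal)) ↑x' := by
        rw [hμ, Measure.sum_apply _ hWmeas]
        refine tsum_congr fun x' => ?_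
        rw [Measure.smul_apply, smul_eq_mul, Measure.dirac_apply' _ hWmeas]
        rfl
      rw [hμW]
      -- choice of representatives
      have hchoice : ∀ q' : (pr '' A : Set _), ∃ x' : A, pr ↑x' = ↑q' ∧
          ((↑q' : Quotient (MulAction.orbitRel G X)) ∈ V → (↑x' : X) ∈ interior W) := by
        intro q'
        by_cases hq'V : (↑q' : Quotient (MulAction.orbitRel G X)) ∈ V
        · obtain ⟨z, hzW, hzq⟩ := hq'V
          have hzA : z ∈ A := by
            have h1 : r ↑q' ∈ A ∧ pr (r ↑q') = ↑q' := hr ↑q' q'.2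
            exact hAorbit h1.1 (hQeq (hzq.trans h1.2.symm))
          exact ⟨⟨z, hzA⟩, hzq, fun _ => hzW⟩
        · have h1 := hr ↑q' q'.2
          exact ⟨⟨r ↑q', h1.1⟩, h1.2, fun hc => absurd hc hq'V⟩
      choose Φ hΦ1 hΦ2 using hchoice
      have hΦinj : Function.Injective Φ := by
        intro a b hab
        apply Subtype.ext
        rw [← hΦ1 a, ← hΦ1 b, hab]
      refine ENNReal.summable.tsum_le_tsum_of_inj Φ hΦinj (fun _ _ => zero_le) (fun q' => ?_)
        ENNReal.summable
      rw [Measure.smul_apply, smul_eq_mul, Measure.dirac_apply' _ hVmeas]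
      by_cases hq'V : (↑q' : Quotient (MulAction.orbitRel G X)) ∈ V
      · rw [Set.indicator_of_mem hq'V, Set.indicator_of_mem (hΦ2 q' hq'V)]
        have hwq : w (↑(Φ q') : X) = w (r ↑q') := by
          have h1 := hr ↑q' q'.2
          exact hworbit (hQeq ((hΦ1 q').trans h1.2.symm))
        rw [hwq]
        simp only [Pi.one_apply, mul_one]
        rw [div_eq_mul_inv]
        calc (w (r ↑q') : ENNReal) * (Nat.card (MulAction.stabilizer G (r ↑q')) : ENNReal)⁻¹
            ≤ (w (r ↑q') : ENNReal) * 1 :=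
              mul_le_mul_right (ENNReal.inv_le_one.2 (by exact_mod_cast hstabpos (r ↑q'))) _
          _ = (w (r ↑q') : ENNReal) := mul_one _
      · rw [Set.indicator_of_notMem hq'V, mul_zero]
        exact zero_le
    exact lt_of_le_of_lt (hle.trans (measure_mono interior_subset)) hWfin
  · -- the local pushforward identity
    intro U Γ hUopen hΓfin hΓinv hΓdisj
    haveI hΓfinite : Finite Γ := hΓfin.to_subtype
    have hΓpos : 0 < Nat.card Γ := Nat.card_pos
    have hΓ0 : (Nat.card Γ : ENNReal) ≠ 0 := by exact_mod_cast hΓpos.ne'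
    have hΓtop : (Nat.card Γ : ENNReal) ≠ ⊤ := ENNReal.natCast_ne_top _
    have hmemΓ : ∀ (g : G) (z : X), z ∈ U → g • z ∈ U → g ∈ Γ := by
      intro g z hz hgz
      by_contra hgn
      have h1 : g • z ∈ (g • U) ∩ U := ⟨Set.smul_mem_smul_set hz, hgz⟩
      rw [hΓdisj g hgn] at h1
      exact h1
    have hπUmeas : MeasurableSet (pr '' U) := himg_meas hUopen
    ext S hS
    rw [Measure.restrict_apply hS, Measure.sum_apply _ (hS.inter hπUmeas),
      Measure.smul_apply, Measure.map_apply hprmeas hS,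
      Measure.restrict_apply (hprmeas hS), hμ,
      Measure.sum_apply _ ((hprmeas hS).inter hUopen.measurableSet), smul_eq_mul]
    have hLHS : ∀ q : (pr '' A : Set _),
        (((w (r ↑q) : ENNReal) / (Nat.card (MulAction.stabilizer G (r ↑q)) : ENNReal)) •
          Measure.dirac (↑q : Quotient (MulAction.orbitRel G X))) (S ∩ pr '' U)
        = ((w (r ↑q) : ENNReal) / (Nat.card (MulAction.stabilizer G (r ↑q)) : ENNReal)) *
            (S ∩ pr '' U).indicator (fun _ => (1:ENNReal)) ↑q := by
      intro q
      rw [Measure.smul_apply, smul_eq_mul, Measure.dirac_apply' _ (hS.inter hπUmeas)]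
      rfl
    have hRHS : ∀ x : A,
        ((w (x : X) : ENNReal) • Measure.dirac (x : X)) (pr ⁻¹' S ∩ U)
        = (w (x : X) : ENNReal) * (pr ⁻¹' S ∩ U).indicator (fun _ => (1:ENNReal)) ↑x := by
      intro x
      rw [Measure.smul_apply, smul_eq_mul,
        Measure.dirac_apply' _ ((hprmeas hS).inter hUopen.measurableSet)]
      rfl
    rw [tsum_congr hLHS, tsum_congr hRHS]
    -- now a pure tsum identity
    set p : A → (pr '' A : Set _) := fun x => ⟨pr ↑x, Set.mem_image_of_mem pr x.2⟩ with hp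
    set f : A → ENNReal :=
      fun x => (w (x : X) : ENNReal) * (pr ⁻¹' S ∩ U).indicator (fun _ => (1:ENNReal)) ↑x with hf
    have key : ∀ q : (pr '' A : Set _),
        (∑' (x : {x : A // p x = q}), f ↑x)
        = (Nat.card Γ : ENNReal) *
          (((w (r ↑q) : ENNReal) / (Nat.card (MulAction.stabilizer G (r ↑q)) : ENNReal)) *
            (S ∩ pr '' U).indicator (fun _ => (1:ENNReal)) ↑q) := by
      intro q
      obtain ⟨hyA, hyq⟩ := hr ↑q q.2
      have hfib : ∀ x : {x : A // p x = q}, pr ↑↑x = ↑q :=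
        fun x => congrArg Subtype.val x.2
      have horb : ∀ x : {x : A // p x = q}, (↑↑x : X) ∈ MulAction.orbit G (r ↑q) :=
        fun x => hQeq ((hfib x).trans hyq.symm)
      have hfval : ∀ x : {x : A // p x = q}, f ↑x
          = ((w (r ↑q) : ENNReal) * S.indicator (fun _ => (1:ENNReal)) ↑q) *
              U.indicator (fun _ => (1:ENNReal)) ↑↑x := by
        intro x
        have hwx : (w (↑↑x : X) : ENNReal) = (w (r ↑q) : ENNReal) := by
          exact_mod_cast hworbit (horb x)
        by_cases hqS : (↑q : Quotient (MulAction.orbitRel G X)) ∈ S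
        · by_cases hxU : (↑↑x : X) ∈ U
          · have hmem : (↑↑x : X) ∈ pr ⁻¹' S ∩ U :=
              ⟨by rw [Set.mem_preimage, hfib x]; exact hqS, hxU⟩
            rw [hf]
            simp only
            rw [Set.indicator_of_mem hmem, Set.indicator_of_mem hqS,
              Set.indicator_of_mem hxU, hwx]
            ring
          · rw [hf]
            simp only
            rw [Set.indicator_of_notMem (fun hc => hxU hc.2),
              Set.indicator_of_notMem hxU, mul_zero, mul_zero]
        · rw [hf]
          simp only
          rw [Set.indicator_of_notMem
              (fun hc => hqS (by rw [← hfib x]; exact hc.1)),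
            Set.indicator_of_notMem hqS, mul_zero, mul_zero, zero_mul]
      rw [tsum_congr hfval, ENNReal.tsum_mul_left]
      -- equivalence between the fiber and the orbit
      have horbA : MulAction.orbit G (r ↑q) ⊆ A := fun z hz => hAorbit hyA hz
      let e : (MulAction.orbit G (r ↑q) : Set X) ≃ {x : A // p x = q} :=
        { toFun := fun z => ⟨⟨↑z, horbA z.2⟩, Subtype.ext ((hQeq' z.2).trans hyq)⟩
          invFun := fun x => ⟨↑↑x, horb x⟩
          left_inv := fun z => rfl
          right_inv := fun x => Subtype.ext (Subtype.ext rfl) }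
      have efib : (∑' (x : {x : A // p x = q}), U.indicator (fun _ => (1:ENNReal)) ↑↑x)
          = ∑' (z : (MulAction.orbit G (r ↑q) : Set X)),
              U.indicator (fun _ => (1:ENNReal)) ↑z := by
        refine ((Equiv.tsum_eq e (fun x : {x : A // p x = q} =>
          U.indicator (fun _ => (1:ENNReal)) ↑↑x)).symm.trans (tsum_congr fun z => ?_))
        rfl
      rw [efib]
      by_cases hqU : (↑q : Quotient (MulAction.orbitRel G X)) ∈ pr '' U
      · obtain ⟨u, huU, hupr⟩ := hqU
        have huorb : u ∈ MulAction.orbit G (r ↑q) := hQeq (hupr.trans hyq.symm)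
        have horbu : MulAction.orbit G u = MulAction.orbit G (r ↑q) :=
          MulAction.orbit_eq_iff.2 huorb
        have hcount := aux_orbit_inter_count hΓfin hΓinv hΓdisj huU
        rw [horbu] at hcount
        have hstabeq : Nat.card (MulAction.stabilizer G u)
            = Nat.card (MulAction.stabilizer G (r ↑q)) :=
          Nat.card_congr (MulAction.stabilizerEquivStabilizerOfOrbitRel
            (MulAction.orbitRel_apply.2 huorb)).toEquiv
        rw [hstabeq] at hcount
        have hfinU : (MulAction.orbit G (r ↑q) ∩ U).Finite := by
          refine (hΓfin.image (fun g : G => g • u)).subset ?_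
          rintro z ⟨hzorb, hzU⟩
          rw [← horbu] at hzorb
          obtain ⟨g, rfl⟩ := hzorb
          exact ⟨g, hmemΓ g u huU hzU, rfl⟩
        rw [aux_tsum_indicator_count hfinU]
        set n : ℕ := Nat.card ↥(MulAction.orbit G (r ↑q) ∩ U) with hn
        set s : ℕ := Nat.card (MulAction.stabilizer G (r ↑q)) with hs
        have hs0 : (s : ENNReal) ≠ 0 := by exact_mod_cast (hstabpos (r ↑q)).ne'
        have hstop : (s : ENNReal) ≠ ⊤ := ENNReal.natCast_ne_top _
        have hΓns : (Nat.card Γ : ENNReal) = (n : ENNReal) * (s : ENNReal) := by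
          exact_mod_cast hcount.symm
        by_cases hqS : (↑q : Quotient (MulAction.orbitRel G X)) ∈ S
        · have hmem2 : (↑q : Quotient (MulAction.orbitRel G X)) ∈ S ∩ pr '' U :=
            ⟨hqS, ⟨u, huU, hupr⟩⟩
          rw [Set.indicator_of_mem hqS, Set.indicator_of_mem hmem2, hΓns, div_eq_mul_inv]
          calc (w (r ↑q) : ENNReal) * 1 * ↑n
              = ((↑s * (↑s)⁻¹)) * ((w (r ↑q) : ENNReal) * ↑n) := by
                rw [ENNReal.mul_inv_cancel hs0 hstop]; ring
            _ = ((n : ENNReal) * ↑s) * ((w (r ↑q) : ENNReal) * (↑s)⁻¹ * 1) := by ring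
        · rw [Set.indicator_of_notMem hqS,
            Set.indicator_of_notMem
              (fun hc => hqS (Set.mem_of_mem_inter_left hc)),
            mul_zero, zero_mul, mul_zero, mul_zero]
      · have hempty : MulAction.orbit G (r ↑q) ∩ U = ∅ := by
          ext z
          simp only [Set.mem_inter_iff, Set.mem_empty_iff_false, iff_false, not_and]
          intro hzorb hzU
          exact hqU ⟨z, hzU, (hQeq' hzorb).trans hyq⟩
        have hfinU : (MulAction.orbit G (r ↑q) ∩ U).Finite := by
          rw [hempty]; exact Set.finite_empty
        have hcard0 : Nat.card ↥(MulAction.orbit G (r ↑q) ∩ U) = 0 := by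
          rw [hempty]; simp
        rw [aux_tsum_indicator_count hfinU,
          Set.indicator_of_notMem (fun hc => hqU (Set.mem_of_mem_inter_right hc)), hcard0]
        simp
    -- assemble
    have hsum : (∑' (x : A), f x)
        = (Nat.card Γ : ENNReal) * ∑' (q : (pr '' A : Set _)),
            (((w (r ↑q) : ENNReal) / (Nat.card (MulAction.stabilizer G (r ↑q)) : ENNReal)) *
              (S ∩ pr '' U).indicator (fun _ => (1:ENNReal)) ↑q) := by
      calc (∑' (x : A), f x)
          = ∑' (σ : Σ q : (pr '' A : Set _), {x : A // p x = q}), f ↑σ.2 :=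
            ((Equiv.sigmaFiberEquiv p).tsum_eq f).symm
        _ = ∑' (q : (pr '' A : Set _)), ∑' (x : {x : A // p x = q}), f ↑x :=
            ENNReal.tsum_sigma' _
        _ = ∑' (q : (pr '' A : Set _)), (Nat.card Γ : ENNReal) *
              (((w (r ↑q) : ENNReal) / (Nat.card (MulAction.stabilizer G (r ↑q)) : ENNReal)) *
                (S ∩ pr '' U).indicator (fun _ => (1:ENNReal)) ↑q) := tsum_congr key
        _ = _ := ENNReal.tsum_mul_left
    rw [hsum, ← mul_assoc, ENNReal.inv_mul_cancel hΓ0 hΓtop, one_mul]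
end

section
/- Let G act properly discontinuously by homeomorphisms on a locally compact, Hausdorff, second countable space X, with quotient map π : X → X/G. If a sequence (μ_n) of locally finite G-invariant Borel measures on X converges vaguely to a locally finite G-invariant Borel measure μ, then the local pushforwards π_*μ_n converge vaguely to π_*μ on X/G. In other words, taking local pushforwards is continuous with respect to vague convergence. -/
open MeasureTheory Filter Topology Pointwise

section Aux
set_option linter.unusedSectionVars false
set_option maxHeartbeats 1000000
open Set Function

variable {X : Type*} [TopologicalSpace X] {G : Type*} [Group G] [MulAction G X]
  [ContinuousConstSMul G X]

/-- finite support of `g ↦ h (g • x)` -/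
lemma my_supp_finite
    (hpd : ∀ K L : Set X, IsCompact K → IsCompact L →
      {g : G | ((g • K) ∩ L).Nonempty}.Finite)
    {h : X → ℝ} (hh : HasCompactSupport h) (x : X) :
    (Function.support fun g : G => h (g • x)).Finite := by
  refine (hpd {x} (tsupport h) isCompact_singleton hh).subset ?_
  intro g hg
  exact ⟨g • x, by simp [Set.smul_set_singleton], subset_tsupport _ hg⟩

lemma my_Hfun_smul {h : X → ℝ} (g₀ : G) (x : X) :
    ∑ᶠ g : G, h (g • (g₀ • x)) = ∑ᶠ g : G, h (g • x) := by
  have := finsum_comp_equiv (Equiv.mulRight g₀) (f := fun g : G => h (g • x))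
  simpa [smul_smul] using this

lemma my_Hfun_cont [LocallyCompactSpace X]
    (hpd : ∀ K L : Set X, IsCompact K → IsCompact L →
      {g : G | ((g • K) ∩ L).Nonempty}.Finite)
    {h : X → ℝ} (hc : Continuous h) (hh : HasCompactSupport h) :
    Continuous fun x : X => ∑ᶠ g : G, h (g • x) := by
  rw [continuous_iff_continuousAt]
  intro x₀
  obtain ⟨K, hKc, hKn⟩ := exists_compact_mem_nhds x₀
  set F := (hpd K (tsupport h) hKc hh).toFinset with hF
  have key : ∀ x ∈ K, (∑ᶠ g : G, h (g • x)) = ∑ g ∈ F, h (g • x) := by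
    intro x hx
    apply finsum_eq_sum_of_support_subset
    intro g hg
    simp only [hF, Finset.mem_coe, Set.Finite.mem_toFinset]
    exact ⟨g • x, Set.smul_mem_smul_set hx, subset_tsupport _ hg⟩
  have hev : (fun x => ∑ g ∈ F, h (g • x)) =ᶠ[𝓝 x₀] fun x => ∑ᶠ g : G, h (g • x) :=
    Filter.eventually_of_mem hKn fun x hx => (key x hx).symm
  exact ContinuousAt.congr
    ((continuous_finset_sum F fun g _ => hc.comp (continuous_const_smul g)).continuousAt) hev

lemma my_exists_wc [T2Space X] [LocallyCompactSpace X]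
    (hpd : ∀ K L : Set X, IsCompact K → IsCompact L →
      {g : G | ((g • K) ∩ L).Nonempty}.Finite) (x : X) :
    ∃ (U : Set X) (Γ : Subgroup G), IsOpen U ∧ x ∈ U ∧ (Γ : Set G).Finite ∧
      (∀ g ∈ Γ, g • U = U) ∧ (∀ g : G, g ∉ Γ → (g • U) ∩ U = ∅) := by
  obtain ⟨K, hKc, hKn⟩ := exists_compact_mem_nhds x
  set Γ := MulAction.stabilizer G x with hΓ
  have hΓfin : (Γ : Set G).Finite := by
    refine (hpd {x} {x} isCompact_singleton isCompact_singleton).subset ?_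
    intro g hg
    have : g • x = x := hg
    exact ⟨x, by simp [Set.smul_set_singleton, this]⟩
  have sep : ∀ g : G, ∃ V : Set X, IsOpen V ∧ x ∈ V ∧ (g ∉ Γ → (g • V) ∩ V = ∅) := by
    intro g
    by_cases hg : g ∈ Γ
    · exact ⟨Set.univ, isOpen_univ, trivial, fun h => absurd hg h⟩
    · have hgx : g • x ≠ x := hg
      obtain ⟨A, B, hA, hB, hgA, hxB, hAB⟩ := t2_separation hgx
      refine ⟨B ∩ (g • ·) ⁻¹' A, hB.inter (hA.preimage (continuous_const_smul g)),
        ⟨hxB, hgA⟩, fun _ => ?_⟩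
      rw [Set.eq_empty_iff_forall_notMem]
      rintro y ⟨⟨z, ⟨_, hzA⟩, rfl⟩, hyB, _⟩
      exact hAB.ne_of_mem hzA hyB rfl
  choose V hVo hVx hVd using sep
  classical
  set S := (hpd K K hKc hKc).toFinset.filter (· ∉ Γ) with hS
  set W := interior K ∩ ⋂ g ∈ S, V g with hW
  have hWo : IsOpen W := isOpen_interior.inter (isOpen_biInter_finset fun g _ => hVo g)
  have hWx : x ∈ W := ⟨mem_interior_iff_mem_nhds.2 hKn, Set.mem_biInter fun g _ => hVx g⟩
  have hWd : ∀ g : G, g ∉ Γ → (g • W) ∩ W = ∅ := by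
    intro g hg
    by_cases hgF : ((g • K) ∩ K).Nonempty
    · have hgS : g ∈ S := by
        simp only [hS, Finset.mem_filter, Set.Finite.mem_toFinset]
        exact ⟨hgF, hg⟩
      have hWV : W ⊆ V g := fun y hy => Set.mem_iInter₂.1 hy.2 g hgS
      rw [← Set.subset_empty_iff, ← hVd g hg]
      exact Set.inter_subset_inter (Set.smul_set_mono hWV) hWV
    · rw [← Set.subset_empty_iff]
      intro y hy
      exact hgF ⟨y, Set.smul_set_mono (Set.inter_subset_left.trans interior_subset) hy.1,
        (Set.inter_subset_left.trans interior_subset) hy.2⟩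
  set U := ⋂ g ∈ (Γ : Set G), g • W with hU
  have hUW : U ⊆ W := by
    intro y hy
    have := Set.mem_iInter₂.1 hy (1 : G) Γ.one_mem
    simpa using this
  have hUx : x ∈ U := by
    refine Set.mem_biInter fun g hg => ?_
    rw [Set.mem_smul_set_iff_inv_smul_mem]
    have : g⁻¹ • x = x := Γ.inv_mem hg
    rwa [this]
  have hUsub : ∀ g ∈ Γ, g • U ⊆ U := by
    intro g hg y hy
    obtain ⟨u, hu, rfl⟩ := hy
    refine Set.mem_biInter fun k hk => ?_
    have hk' : g⁻¹ * k ∈ Γ := Γ.mul_mem (Γ.inv_mem hg) hk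
    have hu' : u ∈ (g⁻¹ * k) • W := Set.mem_iInter₂.1 hu _ hk'
    obtain ⟨w, hw, rfl⟩ := hu'
    show g • (g⁻¹ * k) • w ∈ k • W
    rw [smul_smul, ← mul_assoc, mul_inv_cancel, one_mul]
    exact Set.smul_mem_smul_set hw
  have hUinv : ∀ g ∈ Γ, g • U = U := by
    intro g hg
    refine subset_antisymm (hUsub g hg) ?_
    intro y hy
    rw [Set.mem_smul_set_iff_inv_smul_mem]
    exact hUsub g⁻¹ (Γ.inv_mem hg) (Set.smul_mem_smul_set hy)
  refine ⟨U, Γ, ?_, hUx, hΓfin, hUinv, fun g hg => ?_⟩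
  · exact hΓfin.isOpen_biInter fun g _ => hWo.smul g
  · rw [← Set.subset_empty_iff, ← hWd g hg]
    exact Set.inter_subset_inter (Set.smul_set_mono hUW) hUW

lemma my_sat_closed [T2Space X] [LocallyCompactSpace X]
    (hpd : ∀ K L : Set X, IsCompact K → IsCompact L →
      {g : G | ((g • K) ∩ L).Nonempty}.Finite)
    {K : Set X} (hK : IsCompact K) :
    IsClosed {x : X | ∃ g : G, g • x ∈ K} := by
  rw [← isOpen_compl_iff, isOpen_iff_forall_mem_open]
  intro x hx
  obtain ⟨C, hCc, hCn⟩ := exists_compact_mem_nhds x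
  classical
  set F := (hpd K C hK hCc).toFinset with hF
  refine ⟨interior C ∩ ⋂ g ∈ F, (g • K)ᶜ, ?_, ?_, mem_interior_iff_mem_nhds.2 hCn, ?_⟩
  · rintro y ⟨hyC, hyK⟩ ⟨g, hgy⟩
    have hyg : y ∈ g⁻¹ • K := by
      rw [Set.mem_smul_set_iff_inv_smul_mem, inv_inv]
      exact hgy
    have hgF : g⁻¹ ∈ F := by
      simp only [hF, Set.Finite.mem_toFinset]
      exact ⟨y, hyg, interior_subset hyC⟩
    exact (Set.mem_iInter₂.1 hyK g⁻¹ hgF) hyg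
  · refine isOpen_interior.inter (isOpen_biInter_finset fun g _ => ?_)
    have : IsCompact (g • K) := hK.smul g
    exact this.isClosed.isOpen_compl
  · refine Set.mem_iInter₂.2 fun g _ => ?_
    simp only [Set.mem_compl_iff]
    rintro ⟨k, hk, rfl⟩
    exact hx ⟨g⁻¹, by rwa [inv_smul_smul]⟩

lemma my_compact_lift [LocallyCompactSpace X]
    {C : Set (Quotient (MulAction.orbitRel G X))} (hC : IsCompact C) :
    ∃ L : Set X, IsCompact L ∧ C ⊆ Quotient.mk (MulAction.orbitRel G X) '' L := by
  have hopen : IsOpenMap (Quotient.mk (MulAction.orbitRel G X)) :=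
    (MulAction.isOpenQuotientMap_quotientMk).isOpenMap
  choose N hNc hNn using fun x : X => exists_compact_mem_nhds x
  have hcov : C ⊆ ⋃ x : X, Quotient.mk (MulAction.orbitRel G X) '' interior (N x) := by
    intro q _
    obtain ⟨y, rfl⟩ := Quotient.exists_rep q
    exact Set.mem_iUnion.2 ⟨y, Set.mem_image_of_mem _ (mem_interior_iff_mem_nhds.2 (hNn y))⟩
  obtain ⟨t, ht⟩ := hC.elim_finite_subcover
      (fun x : X => Quotient.mk (MulAction.orbitRel G X) '' interior (N x))
      (fun x => hopen _ isOpen_interior) hcov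
  refine ⟨⋃ x ∈ t, N x, t.finite_toSet.isCompact_biUnion fun x _ => hNc x, ?_⟩
  intro q hq
  obtain ⟨x, hxt, y, hy, rfl⟩ := by
    simpa using ht hq
  exact ⟨y, Set.mem_biUnion hxt (interior_subset hy), rfl⟩
lemma my_unfold_chart [T2Space X] [LocallyCompactSpace X] [SecondCountableTopology X]
    [MeasurableSpace X] [BorelSpace X]
    {μ : Measure X} {ν : Measure (Quotient (MulAction.orbitRel G X))}
    (hμinv : SMulInvariantMeasure G X μ) (hμlf : IsLocallyFiniteMeasure μ)
    {U : Set X} {Γ : Subgroup G} (hUo : IsOpen U) (hΓfin : (Γ : Set G).Finite)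
    (hΓU : ∀ g ∈ Γ, g • U = U) (hdisj : ∀ g : G, g ∉ Γ → (g • U) ∩ U = ∅)
    (hres : ν.restrict (Quotient.mk (MulAction.orbitRel G X) '' U) =
        (Nat.card Γ : ENNReal)⁻¹ • (μ.restrict U).map (Quotient.mk (MulAction.orbitRel G X)))
    {h : X → ℝ} (hc : Continuous h) (hcs : HasCompactSupport h) (hsupp : tsupport h ⊆ U)
    {H : Quotient (MulAction.orbitRel G X) → ℝ} (hHc : Continuous H)
    (hH : ∀ x : X, H (Quotient.mk (MulAction.orbitRel G X) x) = ∑ᶠ g : G, h (g • x)) :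
    ∫ q, H q ∂ν = ∫ x, h x ∂μ := by
  classical
  letI : MeasurableSpace G := ⊤
  haveI : MeasurableSMul G X :=
    { measurable_const_smul := fun c => (continuous_const_smul c).measurable
      measurable_smul_const := fun _ => measurable_from_top }
  haveI := hμinv; haveI := hμlf
  have hπc : Continuous (Quotient.mk (MulAction.orbitRel G X)) :=
    (MulAction.isOpenQuotientMap_quotientMk).continuous
  haveI : OpensMeasurableSpace (Quotient (MulAction.orbitRel G X)) :=
    ⟨MeasurableSpace.generateFrom_le fun s hs =>
      measurableSet_quotient.2 (hs.preimage hπc).measurableSet⟩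
  -- H vanishes off π '' U
  have hH0 : ∀ q ∉ Quotient.mk (MulAction.orbitRel G X) '' U, H q = 0 := by
    intro q hq
    obtain ⟨x, rfl⟩ := Quotient.exists_rep q
    rw [hH]
    refine finsum_eq_zero_of_forall_eq_zero fun g => ?_
    by_contra hne
    have hgx : g • x ∈ U := hsupp (subset_tsupport _ hne)
    exact hq ⟨g • x, hgx, Quotient.sound ⟨g, rfl⟩⟩
  have step1 : ∫ q, H q ∂ν = ∫ q in Quotient.mk (MulAction.orbitRel G X) '' U, H q ∂ν :=
    (setIntegral_eq_integral_of_forall_compl_eq_zero hH0).symm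
  rw [step1]
  rw [show ∫ q in Quotient.mk (MulAction.orbitRel G X) '' U, H q ∂ν
      = ∫ q, H q ∂(ν.restrict (Quotient.mk (MulAction.orbitRel G X) '' U)) from rfl, hres,
    integral_smul_measure]
  have hmap : ∫ q, H q ∂((μ.restrict U).map (Quotient.mk (MulAction.orbitRel G X))) =
      ∫ x, H (Quotient.mk (MulAction.orbitRel G X) x) ∂(μ.restrict U) := by
    refine integral_map ?_ ?_
    · exact (Measurable.aemeasurable fun s hs => hs)
    · exact (hHc.measurable).aestronglyMeasurable
  rw [hmap]
  set Γf := hΓfin.toFinset with hΓf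
  have key : EqOn (fun x => H (Quotient.mk (MulAction.orbitRel G X) x))
      (fun x => ∑ g ∈ Γf, h (g • x)) U := by
    intro x hx
    simp only
    rw [hH]
    apply finsum_eq_sum_of_support_subset
    intro g hg
    have hgx : g • x ∈ U := hsupp (subset_tsupport _ hg)
    simp only [hΓf, Finset.mem_coe, Set.Finite.mem_toFinset]
    by_contra hgΓ
    exact absurd (hdisj g hgΓ)
      (Set.Nonempty.ne_empty ⟨g • x, Set.smul_mem_smul_set hx, hgx⟩)
  rw [setIntegral_congr_fun hUo.measurableSet key]
  have hint : ∀ g : G, Integrable (fun x => h (g • x)) μ := fun g =>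
    (hc.comp (continuous_const_smul g)).integrable_of_hasCompactSupport
      (hcs.comp_isClosedEmbedding (Homeomorph.smul g).isClosedEmbedding)
  rw [integral_finset_sum Γf fun g _ => (hint g).restrict]
  have swap : ∀ g ∈ Γf, ∫ x in U, h (g • x) ∂μ = ∫ x in U, h x ∂μ := by
    intro g hgf
    have hgΓ : g ∈ Γ := by simpa [hΓf, Set.Finite.mem_toFinset] using hgf
    have hpre : (fun x : X => g • x) ⁻¹' U = U := by
      rw [Set.preimage_smul]
      exact hΓU g⁻¹ (Γ.inv_mem hgΓ)
    calc ∫ x in U, h (g • x) ∂μ = ∫ x in (fun x : X => g • x) ⁻¹' U, h (g • x) ∂μ := by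
          rw [hpre]
      _ = ∫ y in U, h y ∂μ := (measurePreserving_smul g μ).setIntegral_preimage_emb
            (measurableEmbedding_const_smul g) _ _
  rw [Finset.sum_congr rfl swap, Finset.sum_const]
  have hUint : ∫ x in U, h x ∂μ = ∫ x, h x ∂μ :=
    setIntegral_eq_integral_of_forall_compl_eq_zero fun x hx =>
      image_eq_zero_of_notMem_tsupport fun hxt => hx (hsupp hxt)
  rw [hUint]
  have hcard : Γf.card = Nat.card Γ := by
    rw [hΓf, ← Nat.card_eq_card_finite_toFinset hΓfin]
    rfl
  haveI : Finite (Γ : Set G) := hΓfin.to_subtype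
  have hpos : 0 < Nat.card Γ := Nat.card_pos (α := Γ)
  have hn : (Nat.card Γ : ℝ) ≠ 0 := by exact_mod_cast hpos.ne'
  rw [ENNReal.toReal_inv, ENNReal.toReal_natCast, nsmul_eq_mul, smul_eq_mul, hcard,
    ← mul_assoc, inv_mul_cancel₀ hn, one_mul]

lemma my_unfold [T2Space X] [LocallyCompactSpace X] [SecondCountableTopology X]
    [MeasurableSpace X] [BorelSpace X]
    (hpd : ∀ K L : Set X, IsCompact K → IsCompact L →
      {g : G | ((g • K) ∩ L).Nonempty}.Finite)
    {μ : Measure X} {ν : Measure (Quotient (MulAction.orbitRel G X))}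
    (hlp : IsLocalPushforward μ ν) (hμlf : IsLocallyFiniteMeasure μ)
    (hμinv : SMulInvariantMeasure G X μ)
    {h : X → ℝ} (hc : Continuous h) (hcs : HasCompactSupport h)
    {H : Quotient (MulAction.orbitRel G X) → ℝ} (hHc : Continuous H)
    (hH : ∀ x : X, H (Quotient.mk (MulAction.orbitRel G X) x) = ∑ᶠ g : G, h (g • x)) :
    ∫ q, H q ∂ν = ∫ x, h x ∂μ := by
  classical
  haveI := hμlf
  haveI := hlp.1
  haveI : ProperlyDiscontinuousSMul G X := by
    refine ⟨fun {K L} hK hL => (hpd K L hK hL).subset fun g hg => ?_⟩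
    simp only [Set.mem_setOf_eq] at hg ⊢
    rw [Set.nonempty_iff_ne_empty]
    rw [Set.image_smul] at hg
    exact hg.ne_empty
  have hπc : Continuous (Quotient.mk (MulAction.orbitRel G X)) :=
    (MulAction.isOpenQuotientMap_quotientMk).continuous
  haveI : OpensMeasurableSpace (Quotient (MulAction.orbitRel G X)) :=
    ⟨MeasurableSpace.generateFrom_le fun s hs =>
      measurableSet_quotient.2 (hs.preimage hπc).measurableSet⟩
  set K := tsupport h with hK
  choose Uc Γc hUo hUx hΓfin hΓU hdisj using fun x : X => my_exists_wc hpd x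
  have hcover : K ⊆ ⋃ y : X, Uc y := fun x _ => Set.mem_iUnion.2 ⟨x, hUx x⟩
  obtain ⟨t, ht⟩ := hcs.elim_finite_subcover Uc hUo hcover
  obtain ⟨p, hp⟩ := PartitionOfUnity.exists_isSubordinate (ι := ↥t)
      (isClosed_tsupport h) (fun i => Uc i) (fun i => hUo i)
      (by
        refine ht.trans ?_
        intro x hx
        obtain ⟨y, hyt, hxy⟩ := Set.mem_iUnion₂.1 hx
        exact Set.mem_iUnion.2 ⟨⟨y, hyt⟩, hxy⟩)
  set hi : ↥t → X → ℝ := fun i x => p i x * h x with hhi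
  have hic : ∀ i, Continuous (hi i) := fun i => ((p i).continuous).mul hc
  have hics : ∀ i, HasCompactSupport (hi i) := fun _ => hcs.mul_left
  have hsuppi : ∀ i, Function.support (hi i) ⊆ Function.support h := fun i x hx => by
    intro h0
    exact hx (by simp [hhi, h0])
  have hsuppip : ∀ i, Function.support (hi i) ⊆ Function.support ⇑(p i) := fun i x hx => by
    intro h0
    exact hx (by simp [hhi, h0])
  have hisupp : ∀ i, tsupport (hi i) ⊆ Uc i := fun i =>
    (closure_mono (hsuppip i)).trans (hp i)
  have hsum : ∀ x, h x = ∑ i : ↥t, hi i x := by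
    intro x
    by_cases hx : x ∈ K
    · have h1 : ∑ᶠ i, p i x = 1 := p.sum_eq_one hx
      rw [finsum_eq_sum_of_fintype] at h1
      calc h x = (∑ i : ↥t, p i x) * h x := by rw [h1, one_mul]
        _ = ∑ i : ↥t, hi i x := Finset.sum_mul ..
    · have h0 : h x = 0 := image_eq_zero_of_notMem_tsupport hx
      simp [hhi, h0]
  have hcomp : ∀ (i : ↥t) (a b : X), (MulAction.orbitRel G X).r a b →
      (∑ᶠ g : G, hi i (g • a)) = ∑ᶠ g : G, hi i (g • b) := by
    intro i a b hab
    obtain ⟨g₀, rfl⟩ := hab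
    exact my_Hfun_smul g₀ b
  set Hi : ↥t → Quotient (MulAction.orbitRel G X) → ℝ :=
    fun i => Quotient.lift (fun x => ∑ᶠ g : G, hi i (g • x)) (hcomp i) with hHi
  have hHic : ∀ i, Continuous (Hi i) := fun i =>
    Continuous.quotient_lift (my_Hfun_cont hpd (hic i) (hics i)) _
  have hHsum : ∀ q, H q = ∑ i : ↥t, Hi i q := by
    refine Quotient.ind fun x => ?_
    rw [hH]
    set Fx := (hpd {x} K isCompact_singleton hcs).toFinset with hFx
    have hsubh : (Function.support fun g : G => h (g • x)) ⊆ ↑Fx := by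
      intro g hg
      simp only [hFx, Finset.mem_coe, Set.Finite.mem_toFinset]
      exact ⟨g • x, by simp [Set.smul_set_singleton], subset_tsupport _ hg⟩
    have hsubi : ∀ i, (Function.support fun g : G => hi i (g • x)) ⊆ ↑Fx := by
      intro i g hg
      exact hsubh (fun h0 => hg (by simp [hhi, h0]))
    rw [finsum_eq_sum_of_support_subset _ hsubh]
    have hHieq : ∀ i : ↥t, Hi i (Quotient.mk (MulAction.orbitRel G X) x)
        = ∑ g ∈ Fx, hi i (g • x) := fun i =>
      finsum_eq_sum_of_support_subset _ (hsubi i)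
    calc ∑ g ∈ Fx, h (g • x) = ∑ g ∈ Fx, ∑ i : ↥t, hi i (g • x) :=
          Finset.sum_congr rfl fun g _ => hsum (g • x)
      _ = ∑ i : ↥t, ∑ g ∈ Fx, hi i (g • x) := Finset.sum_comm
      _ = ∑ i : ↥t, Hi i (Quotient.mk (MulAction.orbitRel G X) x) :=
          (Finset.sum_congr rfl fun i _ => (hHieq i).symm)
  have hQK : IsCompact (Quotient.mk (MulAction.orbitRel G X) '' K) := hcs.image hπc
  have hHics : ∀ i, HasCompactSupport (Hi i) := by
    intro i
    have hsub : Function.support (Hi i) ⊆ Quotient.mk (MulAction.orbitRel G X) '' K := by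
      intro q hq
      obtain ⟨x, rfl⟩ := Quotient.exists_rep q
      have hne : (∑ᶠ g : G, hi i (g • x)) ≠ 0 := hq
      have : ∃ g : G, hi i (g • x) ≠ 0 := by
        by_contra hall
        push_neg at hall
        exact hne (finsum_eq_zero_of_forall_eq_zero hall)
      obtain ⟨g, hg⟩ := this
      have hgK : g • x ∈ K := subset_tsupport h (hsuppi i (mem_support.2 hg))
      exact ⟨g • x, hgK, Quotient.sound ⟨g, rfl⟩⟩
    exact IsCompact.of_isClosed_subset hQK isClosed_closure
      (closure_minimal hsub hQK.isClosed)
  have hHiint : ∀ i, Integrable (Hi i) ν := fun i =>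
    (hHic i).integrable_of_hasCompactSupport (hHics i)
  have hiint : ∀ i, Integrable (hi i) μ := fun i =>
    (hic i).integrable_of_hasCompactSupport (hics i)
  calc ∫ q, H q ∂ν = ∫ q, ∑ i : ↥t, Hi i q ∂ν := by
        congr 1
        funext q
        exact hHsum q
    _ = ∑ i : ↥t, ∫ q, Hi i q ∂ν := integral_finset_sum _ fun i _ => hHiint i
    _ = ∑ i : ↥t, ∫ x, hi i x ∂μ := Finset.sum_congr rfl fun i _ =>
        my_unfold_chart hμinv hμlf (hUo i) (hΓfin i) (hΓU i) (hdisj i)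
          (hlp.2 (Uc i) (Γc i) (hUo i) (hΓfin i) (hΓU i) (hdisj i))
          (hic i) (hics i) (hisupp i) (hHic i) (fun _ => rfl)
    _ = ∫ x, ∑ i : ↥t, hi i x ∂μ := (integral_finset_sum _ fun i _ => hiint i).symm
    _ = ∫ x, h x ∂μ := by
        congr 1
        funext x
        exact (hsum x).symm

end Aux

set_option maxHeartbeats 1000000 in
/-- For a properly discontinuous action by homeomorphisms of `G` on a locally
compact, Hausdorff, second countable space `X`: if locally finite `G`-invariant Borel measures
`μₙ` converge vaguely to a locally finite `G`-invariant Borel measure `μ`, then their local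
pushforwards `νₙ` converge vaguely to the local pushforward `ν` of `μ` on `X/G`. -/
theorem stmt_6 {X : Type*} [TopologicalSpace X] [LocallyCompactSpace X] [T2Space X]
    [SecondCountableTopology X] [MeasurableSpace X] [BorelSpace X]
    {G : Type*} [Group G] [MulAction G X] [ContinuousConstSMul G X]
    (hpd : ∀ K L : Set X, IsCompact K → IsCompact L →
      {g : G | ((g • K) ∩ L).Nonempty}.Finite)
    (μ : ℕ → Measure X) (μlim : Measure X)
    (hlf : ∀ n, IsLocallyFiniteMeasure (μ n)) (hlflim : IsLocallyFiniteMeasure μlim)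
    (hinv : ∀ n, SMulInvariantMeasure G X (μ n)) (hinvlim : SMulInvariantMeasure G X μlim)
    (hconv : ∀ f : X → ℝ, Continuous f → HasCompactSupport f →
      Filter.Tendsto (fun n => ∫ x, f x ∂(μ n)) Filter.atTop (𝓝 (∫ x, f x ∂μlim)))
    (ν : ℕ → Measure (Quotient (MulAction.orbitRel G X)))
    (νlim : Measure (Quotient (MulAction.orbitRel G X)))
    (hν : ∀ n, IsLocalPushforward (μ n) (ν n)) (hνlim : IsLocalPushforward μlim νlim) :
    ∀ f : Quotient (MulAction.orbitRel G X) → ℝ, Continuous f → HasCompactSupport f →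
      Filter.Tendsto (fun n => ∫ q, f q ∂(ν n)) Filter.atTop (𝓝 (∫ q, f q ∂νlim)) := by
  intro f hf hfc
  classical
  have hπc : Continuous (Quotient.mk (MulAction.orbitRel G X)) :=
    (MulAction.isOpenQuotientMap_quotientMk).continuous
  obtain ⟨L, hLc, hLsub⟩ := my_compact_lift (G := G) hfc
  obtain ⟨w, hw1, _hw0, hwcs, hwmem⟩ :=
    exists_continuous_one_zero_of_isCompact hLc isClosed_empty (Set.disjoint_empty L)
  set W : X → ℝ := fun x => ∑ᶠ g : G, w (g • x) with hWdef
  have hWc : Continuous W := my_Hfun_cont hpd w.continuous hwcs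
  have hWinv : ∀ (g : G) (x : X), W (g • x) = W x := fun g x => my_Hfun_smul g x
  have hWge : ∀ x : X, (∃ g : G, g • x ∈ L) → 1 ≤ W x := by
    rintro x ⟨g, hg⟩
    have h1 : w (g • x) = 1 := hw1 hg
    have hle : w ((1 : G) • (g • x)) ≤ ∑ᶠ g' : G, w (g' • (g • x)) :=
      single_le_finsum (1 : G) (my_supp_finite hpd hwcs (g • x))
        (fun g' => (hwmem _).1)
    rw [one_smul, h1] at hle
    calc (1 : ℝ) ≤ W (g • x) := hle
      _ = W x := hWinv g x
  set D : X → ℝ := fun x => max (W x) 2⁻¹ with hDdef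
  have hDpos : ∀ x, 0 < D x := fun x => lt_of_lt_of_le (by norm_num) (le_max_right _ _)
  set h : X → ℝ :=
    fun x => (f (Quotient.mk (MulAction.orbitRel G X) x) / D x) * w x with hhdef
  have hhc : Continuous h :=
    ((hf.comp hπc).div (hWc.max continuous_const) fun x => (hDpos x).ne').mul w.continuous
  have hhcs : HasCompactSupport h := hwcs.mul_left
  have hHkey : ∀ x : X, f (Quotient.mk (MulAction.orbitRel G X) x) = ∑ᶠ g : G, h (g • x) := by
    intro x
    have hterm : ∀ g : G, h (g • x) =
        (f (Quotient.mk (MulAction.orbitRel G X) x) / D x) * w (g • x) := by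
      intro g
      have hq : (Quotient.mk (MulAction.orbitRel G X) (g • x))
          = Quotient.mk (MulAction.orbitRel G X) x := Quotient.sound ⟨g, rfl⟩
      simp only [hhdef, hDdef]
      rw [hq, hWinv g x]
    rw [finsum_congr hterm,
      ← mul_finsum (fun g : G => w (g • x)) _]
    by_cases hfx : f (Quotient.mk (MulAction.orbitRel G X) x) = 0
    · simp [hfx]
    · have hxL : ∃ g : G, g • x ∈ L := by
        have hmem : Quotient.mk (MulAction.orbitRel G X) x ∈ tsupport f :=
          subset_tsupport f hfx
        obtain ⟨y, hyL, hy⟩ := hLsub hmem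
        obtain ⟨g, hg⟩ := Quotient.exact hy
        refine ⟨g, ?_⟩
        show g • x ∈ L
        rw [show g • x = y from hg]
        exact hyL
      have h1W : 1 ≤ W x := hWge x hxL
      have hDW : D x = W x := max_eq_left (le_trans (by norm_num) h1W)
      rw [hDW, div_mul_cancel₀ _ (by linarith : W x ≠ 0)]
  have h1 : ∀ n, ∫ q, f q ∂(ν n) = ∫ x, h x ∂(μ n) := fun n =>
    my_unfold hpd (hν n) (hlf n) (hinv n) hhc hhcs hf hHkey
  have h2 : ∫ q, f q ∂νlim = ∫ x, h x ∂μlim :=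
    my_unfold hpd hνlim hlflim hinvlim hhc hhcs hf hHkey
  rw [h2]
  exact (hconv h hhc hhcs).congr fun n => (h1 n).symm
end

section
/- Let A ⊆ ℝ^d be a bounded set whose topological boundary ∂A has Lebesgue measure zero. Then lim_{L→∞} (1/L^d)·#{v ∈ ℤ^d : (1/L)·v ∈ A} = Leb(A), where Leb denotes d-dimensional Lebesgue measure. (Here L ranges over positive reals, or equivalently over positive integers.) -/
open MeasureTheory Filter Topology Metric
open scoped ENNReal

namespace Stmt9Aux

variable {d : ℕ}

/-- Half-open cube of side `1/L` with lower corner `v/L`. -/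
def cube (d : ℕ) (L : ℝ) (v : Fin d → ℤ) : Set (Fin d → ℝ) :=
  Set.univ.pi fun i => Set.Ico ((v i : ℝ) / L) ((v i : ℝ) / L + 1 / L)

lemma mem_cube_iff {L : ℝ} (hL : 0 < L) {v : Fin d → ℤ} {x : Fin d → ℝ} :
    x ∈ cube d L v ↔ ∀ i, v i = ⌊L * x i⌋ := by
  simp only [cube, Set.mem_pi, Set.mem_univ, Set.mem_Ico, forall_true_left]
  refine forall_congr' fun i => ?_
  rw [div_le_iff₀ hL, ← add_div, lt_div_iff₀ hL]
  rw [mul_comm]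
  constructor
  · rintro ⟨h1, h2⟩
    exact (Int.floor_eq_iff.mpr ⟨h1, by push_cast at h2 ⊢; linarith⟩).symm
  · rintro h
    rw [h]
    exact ⟨Int.floor_le _, by push_cast; exact Int.lt_floor_add_one _⟩

lemma mem_cube_self {L : ℝ} (hL : 0 < L) (x : Fin d → ℝ) :
    x ∈ cube d L (fun i => ⌊L * x i⌋) := (mem_cube_iff hL).mpr fun _ => rfl

lemma cube_measurable (L : ℝ) (v : Fin d → ℤ) : MeasurableSet (cube d L v) :=
  MeasurableSet.univ_pi fun _ => measurableSet_Ico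

lemma volume_cube {L : ℝ} (hL : 0 < L) (v : Fin d → ℤ) :
    volume (cube d L v) = ENNReal.ofReal (1 / L) ^ d := by
  rw [cube, volume_pi_pi]
  simp [Real.volume_Ico, Finset.prod_const]

lemma cube_disjoint {L : ℝ} (hL : 0 < L) :
    Set.univ.PairwiseDisjoint (cube d L) := by
  intro v _ w _ hvw
  refine Set.disjoint_left.mpr fun x hx hx' => hvw ?_
  rw [mem_cube_iff hL] at hx hx'
  funext i; rw [hx i, hx' i]

lemma dist_le_of_mem_cube {L : ℝ} (hL : 0 < L) {v : Fin d → ℤ} {x y : Fin d → ℝ}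
    (hx : x ∈ cube d L v) (hy : y ∈ cube d L v) : dist x y ≤ 1 / L := by
  rw [dist_pi_le_iff (by positivity)]
  intro i
  have hxi := hx i (Set.mem_univ i)
  have hyi := hy i (Set.mem_univ i)
  simp only [Set.mem_Ico] at hxi hyi
  rw [Real.dist_eq, abs_le]
  constructor <;> linarith

lemma corner_mem_cube {L : ℝ} (hL : 0 < L) (v : Fin d → ℤ) :
    (fun i => (v i : ℝ) / L) ∈ cube d L v := by
  intro i _
  exact ⟨le_refl _, by simp; positivity⟩

end Stmt9Aux

namespace Stmt9Aux2
open Stmt9Aux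
open scoped ENNReal

variable {d : ℕ} {A : Set (Fin d → ℝ)}

lemma finite_S (hbd : Bornology.IsBounded A) {L : ℝ} (hL : 0 < L) :
    {v : Fin d → ℤ | (fun i => (v i : ℝ) / L) ∈ A}.Finite := by
  obtain ⟨M, hM⟩ := hbd.subset_closedBall 0
  refine Set.Finite.subset (Set.Finite.pi (fun i : Fin d =>
    Set.finite_Icc (-⌈L * M⌉) ⌈L * M⌉)) ?_
  intro v hv
  have h1 : dist (fun i => (v i : ℝ) / L) 0 ≤ M := hM hv
  intro i _
  have h2 : dist ((v i : ℝ) / L) 0 ≤ M := le_trans (dist_le_pi_dist (fun j => (v j : ℝ) / L) 0 i) h1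
  rw [Real.dist_eq, sub_zero, abs_div, abs_of_pos hL, div_le_iff₀ hL] at h2
  have h3 : |(v i : ℝ)| ≤ L * M := by linarith [h2, mul_comm M L]
  have h4 : (|v i| : ℝ) ≤ (⌈L * M⌉ : ℝ) := by
    calc (|v i| : ℝ) = |(v i : ℝ)| := by push_cast; ring
      _ ≤ L * M := h3
      _ ≤ (⌈L * M⌉ : ℝ) := Int.le_ceil _
  have h5 : |v i| ≤ ⌈L * M⌉ := by exact_mod_cast h4
  rw [abs_le] at h5
  exact ⟨h5.1, h5.2⟩

lemma count_eq_volume (hbd : Bornology.IsBounded A) {L : ℝ} (hL : 0 < L) :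
    (Nat.card {v : Fin d → ℤ | (fun i => (v i : ℝ) / L) ∈ A} : ℝ≥0∞)
        * ENNReal.ofReal (1 / L) ^ d
      = volume (⋃ v ∈ {v : Fin d → ℤ | (fun i => (v i : ℝ) / L) ∈ A}, cube d L v) := by
  have hS := finite_S hbd hL
  have h1 : (⋃ v ∈ {v : Fin d → ℤ | (fun i => (v i : ℝ) / L) ∈ A}, cube d L v)
      = ⋃ v ∈ hS.toFinset, cube d L v := by
    simp [Set.Finite.mem_toFinset]
  rw [h1, measure_biUnion_finset ((cube_disjoint hL).subset (Set.subset_univ _))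
    (fun v _ => cube_measurable L v)]
  simp_rw [volume_cube hL]
  rw [Finset.sum_const, nsmul_eq_mul]
  congr 1
  rw [Nat.card_coe_set_eq, Set.ncard_eq_toFinset_card _ hS]


lemma union_subset {L : ℝ} (hL : (0:ℝ) < L) :
    (⋃ v ∈ {v : Fin d → ℤ | (fun i => (v i : ℝ) / L) ∈ A}, cube d L v)
      ⊆ cthickening (1 / L) A := by
  intro x hx
  simp only [Set.mem_iUnion, Set.mem_setOf_eq] at hx
  obtain ⟨v, hv, hxv⟩ := hx
  exact mem_cthickening_of_dist_le x _ _ _ hv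
    (dist_le_of_mem_cube hL hxv (corner_mem_cube hL v))

lemma subset_union {L : ℝ} (hL : (0:ℝ) < L) :
    A ⊆ (⋃ v ∈ {v : Fin d → ℤ | (fun i => (v i : ℝ) / L) ∈ A}, cube d L v)
        ∪ (A ∩ cthickening (1 / L) Aᶜ) := by
  intro x hxA
  by_cases hx : x ∈ cthickening (1 / L) Aᶜ
  · exact Or.inr ⟨hxA, hx⟩
  · left
    set v : Fin d → ℤ := fun i => ⌊L * x i⌋ with hv
    have hxv : x ∈ cube d L v := mem_cube_self hL x
    have hvS : (fun i => ((v i : ℝ)) / L) ∈ A := by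
      by_contra hc
      exact hx (mem_cthickening_of_dist_le x _ _ _ hc
        (dist_le_of_mem_cube hL hxv (corner_mem_cube hL v)))
    simp only [Set.mem_iUnion, Set.mem_setOf_eq]
    exact ⟨v, hvS, hxv⟩

end Stmt9Aux2

open Stmt9Aux Stmt9Aux2 in
/-- If `A ⊆ ℝ^d` is bounded and its topological boundary has Lebesgue measure
zero, then `(1/L^d) · #{v ∈ ℤ^d : v/L ∈ A} → Leb(A)` as `L → ∞`. -/
theorem stmt_9 (d : ℕ) (A : Set (Fin d → ℝ)) (hbd : Bornology.IsBounded A)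
    (hfr : volume (frontier A) = 0) :
    Filter.Tendsto
      (fun L : ℝ =>
        (Nat.card {v : Fin d → ℤ | (fun i => (v i : ℝ) / L) ∈ A} : ℝ) / L ^ d)
      Filter.atTop (𝓝 (volume A).toReal) := by
  have hAfin : volume A ≠ ⊤ := hbd.measure_lt_top.ne
  have hclosA : volume (closure A) = volume A := by
    refine le_antisymm ?_ (measure_mono subset_closure)
    calc volume (closure A) = volume (A ∪ frontier A) := by
          rw [← closure_eq_self_union_frontier]
      _ ≤ volume A + volume (frontier A) := measure_union_le _ _
      _ = volume A := by rw [hfr, add_zero]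
  -- the restricted measure for the inner approximation
  set μ : Measure (Fin d → ℝ) := volume.restrict (closure A) with hμ
  have hμfin : μ Set.univ ≠ ⊤ := by
    rw [hμ, Measure.restrict_apply_univ]
    exact hbd.closure.measure_lt_top.ne
  have hA' : Filter.Tendsto (fun r => volume (cthickening r A)) (𝓝 0)
      (𝓝 (volume (closure A))) :=
    tendsto_measure_cthickening ⟨1, one_pos, hbd.cthickening.measure_lt_top.ne⟩
  have hB' : Filter.Tendsto (fun r => μ (cthickening r Aᶜ)) (𝓝 0)
      (𝓝 (μ (closure Aᶜ))) := by
    refine tendsto_measure_cthickening ⟨1, one_pos, ?_⟩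
    exact ((measure_mono (Set.subset_univ _)).trans_lt hμfin.lt_top).ne
  have hμfr : μ (closure Aᶜ) = 0 := by
    rw [hμ, Measure.restrict_apply isClosed_closure.measurableSet,
      Set.inter_comm, ← frontier_eq_closure_inter_closure, hfr]
  rw [Metric.tendsto_atTop]
  intro ε hε
  -- pick a good radius r
  have heps2 : (0:ℝ) < ε / 2 := by linarith
  have h1 : ∀ᶠ r in 𝓝 (0:ℝ), volume (cthickening r A)
      < volume A + ENNReal.ofReal (ε / 2) := by
    rw [hclosA] at hA'
    exact hA'.eventually_lt_const
      (ENNReal.lt_add_right hAfin (by simpa using hε))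
  have h2 : ∀ᶠ r in 𝓝 (0:ℝ), μ (cthickening r Aᶜ) < ENNReal.ofReal (ε / 2) := by
    rw [hμfr] at hB'
    exact hB'.eventually_lt_const (by simpa using heps2)
  obtain ⟨r, ⟨hr1, hr2⟩, hrmem⟩ :=
    (((h1.and h2).filter_mono (nhdsWithin_le_nhds (s := Set.Ioi (0:ℝ)))).and
      self_mem_nhdsWithin).exists
  have hr : (0:ℝ) < r := hrmem
  refine ⟨max 1 (1 / r), fun L hL => ?_⟩
  have hL1 : (1:ℝ) ≤ L := le_trans (le_max_left _ _) hL
  have hL0 : (0:ℝ) < L := lt_of_lt_of_le one_pos hL1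
  have hLr : 1 / L ≤ r := by
    rw [div_le_iff₀ hL0]
    have : 1 / r ≤ L := le_trans (le_max_right _ _) hL
    rw [div_le_iff₀ hr] at this
    linarith [this, mul_comm L r]
  set S := {v : Fin d → ℤ | (fun i => (v i : ℝ) / L) ∈ A} with hS
  set U := ⋃ v ∈ S, cube d L v with hU
  have hUvol : volume U = (Nat.card S : ℝ≥0∞) * ENNReal.ofReal (1 / L) ^ d :=
    (count_eq_volume hbd hL0).symm
  -- finiteness of relevant measures
  have hcthfin : volume (cthickening r A) ≠ ⊤ :=
    (hr1.trans (ENNReal.add_lt_top.mpr ⟨hAfin.lt_top, ENNReal.ofReal_lt_top⟩)).ne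
  have hUle : volume U ≤ volume (cthickening r A) :=
    (measure_mono (union_subset hL0)).trans (measure_mono (cthickening_mono hLr A))
  have hUfin : volume U ≠ ⊤ := (hUle.trans_lt hcthfin.lt_top).ne
  -- value of f L
  have hfL : (Nat.card S : ℝ) / L ^ d = (volume U).toReal := by
    rw [hUvol, ENNReal.toReal_mul, ENNReal.toReal_pow,
      ENNReal.toReal_ofReal (by positivity)]
    simp only [ENNReal.toReal_natCast]
    rw [div_pow, one_pow, div_eq_mul_inv, div_eq_mul_inv, one_mul]
  -- upper bound
  have hub : (volume U).toReal < (volume A).toReal + ε / 2 := by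
    have h := hUle.trans_lt hr1
    have := ENNReal.toReal_lt_toReal hUfin
      (ENNReal.add_lt_top.mpr ⟨hAfin.lt_top, ENNReal.ofReal_lt_top⟩).ne |>.mpr h
    rwa [ENNReal.toReal_add hAfin ENNReal.ofReal_ne_top,
      ENNReal.toReal_ofReal heps2.le] at this
  -- lower bound
  have hlow : (volume A).toReal ≤ (volume U).toReal + ε / 2 := by
    have hsub := subset_union (A := A) hL0
    have hAle : volume A ≤ volume U + volume (A ∩ cthickening (1 / L) Aᶜ) :=
      (measure_mono hsub).trans (measure_union_le _ _)
    have hsmall : volume (A ∩ cthickening (1 / L) Aᶜ) ≤ ENNReal.ofReal (ε / 2) := by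
      have e1 : volume (A ∩ cthickening (1 / L) Aᶜ) ≤ volume (A ∩ cthickening r Aᶜ) :=
        measure_mono (Set.inter_subset_inter_right A (cthickening_mono hLr Aᶜ))
      have e2 : volume (A ∩ cthickening r Aᶜ) ≤ μ (cthickening r Aᶜ) := by
        rw [hμ, Measure.restrict_apply isClosed_cthickening.measurableSet]
        exact measure_mono fun x hx => ⟨hx.2, subset_closure hx.1⟩
      exact e1.trans (e2.trans hr2.le)
    have hAle2 : volume A ≤ volume U + ENNReal.ofReal (ε / 2) :=
      hAle.trans (add_le_add le_rfl hsmall)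
    have := ENNReal.toReal_mono
      (ENNReal.add_ne_top.mpr ⟨hUfin, ENNReal.ofReal_ne_top⟩) hAle2
    rwa [ENNReal.toReal_add hUfin ENNReal.ofReal_ne_top,
      ENNReal.toReal_ofReal heps2.le] at this
  rw [hS] at hfL
  rw [Real.dist_eq, hfL, abs_sub_lt_iff]
  constructor <;> linarith
end

section
/- Let G act properly discontinuously by homeomorphisms on a locally compact, Hausdorff, second countable space X. Let H ≤ G be a subgroup of finite index, let K be a finite normal subgroup of G, and suppose that for every x ∈ X the stabilizers satisfy Stab_G(x) = K and Stab_H(x) = {1}. Let μ be a locally finite G-invariant Borel measure on X, let (π_H)_*μ be its local pushforward to X/H, let (π_G)_*μ be its local pushforward to X/G, and let p : X/H → X/G be the natural projection. Then the ordinary pushforward of (π_H)_*μ under p satisfies p_#((π_H)_*μ) = [G:H]·(π_G)_*μ. -/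
open MeasureTheory Filter Topology Pointwise

open Set in


theorem aux_index {G : Type*} [Group G] (H K : Subgroup G) [K.Normal] (hdisj : H ⊓ K = ⊥) :
    Nat.card K * (H ⊔ K).index = H.index := by
  have h1 : H.relIndex (H ⊔ K) * (H ⊔ K).index = H.index :=
    Subgroup.relIndex_mul_index le_sup_left
  suffices h : H.relIndex (H ⊔ K) = Nat.card K by rw [← h, h1]
  have e : K ≃ (↥(H ⊔ K) ⧸ H.subgroupOf (H ⊔ K)) := by
    refine Equiv.ofBijective (fun k => QuotientGroup.mk ⟨(k : G), Subgroup.mem_sup_right k.2⟩) ⟨?_, ?_⟩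
    · intro a b hab
      rw [QuotientGroup.eq] at hab
      have : ((a : G))⁻¹ * b ∈ H := hab
      have hK : ((a : G))⁻¹ * b ∈ K := K.mul_mem (K.inv_mem a.2) b.2
      have : ((a : G))⁻¹ * b ∈ H ⊓ K := ⟨this, hK⟩
      rw [hdisj, Subgroup.mem_bot] at this
      ext
      exact inv_mul_eq_one.mp this
    · intro q
      induction q using QuotientGroup.induction_on with
      | H s =>
        have hs : (s : G) ∈ (↑(K ⊔ H) : Set G) := by
          rw [sup_comm]; exact s.2
        rw [Subgroup.normal_mul] at hs
        obtain ⟨k, hk, h, hh, hkh⟩ := hs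
        refine ⟨⟨k, hk⟩, ?_⟩
        rw [QuotientGroup.eq]
        show (k⁻¹ * (s : G)) ∈ H
        rw [← hkh]; simpa using hh
  rw [Subgroup.relIndex, Subgroup.index_eq_card, ← Nat.card_congr e]

section Aux
open Set


theorem aux_slice {X : Type*} [TopologicalSpace X] [LocallyCompactSpace X] [T2Space X]
    {G : Type*} [Group G] [MulAction G X] [ContinuousConstSMul G X]
    (hpd : ∀ K L : Set X, IsCompact K → IsCompact L →
      {g : G | ((g • K) ∩ L).Nonempty}.Finite)
    (K : Subgroup G) (hKfin : (K : Set G).Finite)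
    (hstabG : ∀ x : X, MulAction.stabilizer G x = K) (x : X) :
    ∃ U : Set X, IsOpen U ∧ x ∈ U ∧ (∀ g ∈ K, g • U = U) ∧
      (∀ g : G, g ∉ K → (g • U) ∩ U = ∅) := by
  obtain ⟨C, hCcomp, hCnhds⟩ := exists_compact_mem_nhds x
  have hF : {g : G | ((g • C) ∩ C).Nonempty}.Finite := hpd C C hCcomp hCcomp
  have hsep : ∀ g : G, g ∉ K → ∃ W : Set X, IsOpen W ∧ x ∈ W ∧ (g • W) ∩ W = ∅ := by
    intro g hg
    have hgx : g • x ≠ x := by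
      intro h
      exact hg ((hstabG x) ▸ (MulAction.mem_stabilizer_iff.mpr h))
    obtain ⟨A, B, hA, hB, hgA, hxB, hAB⟩ := t2_separation hgx
    refine ⟨(g • ·) ⁻¹' A ∩ B, (hA.preimage (continuous_const_smul g)).inter hB, ⟨hgA, hxB⟩, ?_⟩
    apply Set.eq_empty_of_forall_notMem
    rintro y ⟨⟨z, ⟨hz1, _⟩, rfl⟩, _, hy2⟩
    exact hAB.ne_of_mem hz1 hy2 rfl
  classical
  let W : G → Set X := fun g => if h : g ∉ K then (hsep g h).choose else univ
  have hWopen : ∀ g, IsOpen (W g) := by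
    intro g; by_cases h : g ∉ K
    · simp only [W, dif_pos h]; exact (hsep g h).choose_spec.1
    · simp only [W, dif_neg h]; exact isOpen_univ
  have hWmem : ∀ g, x ∈ W g := by
    intro g; by_cases h : g ∉ K
    · simp only [W, dif_pos h]; exact (hsep g h).choose_spec.2.1
    · simp only [W, dif_neg h]; trivial
  have hWsep : ∀ g, g ∉ K → (g • W g) ∩ W g = ∅ := fun g h => by
    simp only [W, dif_pos h]; exact (hsep g h).choose_spec.2.2
  set F : Set G := {g : G | ((g • C) ∩ C).Nonempty} \ K with hFdef
  have hFfin : F.Finite := hF.diff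
  set V : Set X := interior C ∩ ⋂ g ∈ F, W g with hVdef
  have hVopen : IsOpen V :=
    isOpen_interior.inter (hFfin.isOpen_biInter (fun g _ => hWopen g))
  have hVmem : x ∈ V := ⟨mem_interior_iff_mem_nhds.mpr hCnhds, by
    simp only [mem_iInter₂]; exact fun g _ => hWmem g⟩
  have hVC : V ⊆ C := fun y hy => interior_subset hy.1
  have hVW : ∀ g ∈ F, V ⊆ W g := fun g hg y hy => (mem_iInter₂.mp hy.2) g hg
  have hVsep : ∀ g : G, g ∉ K → (g • V) ∩ V = ∅ := by
    intro g hg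
    by_cases hgF : g ∈ F
    · apply Set.eq_empty_of_forall_notMem
      rintro y ⟨hy1, hy2⟩
      have : y ∈ (g • W g) ∩ W g := by
        refine ⟨?_, hVW g hgF hy2⟩
        obtain ⟨z, hz, rfl⟩ := hy1
        exact ⟨z, hVW g hgF hz, rfl⟩
      rw [hWsep g hg] at this
      exact this
    · apply Set.eq_empty_of_forall_notMem
      rintro y ⟨hy1, hy2⟩
      apply hgF
      refine ⟨⟨y, ?_, hVC hy2⟩, hg⟩
      obtain ⟨z, hz, rfl⟩ := hy1
      exact ⟨z, hVC hz, rfl⟩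
  -- symmetrize over K
  refine ⟨⋂ g ∈ (K : Set G), (g • ·) ⁻¹' V, ?_, ?_, ?_, ?_⟩
  · exact hKfin.isOpen_biInter (fun g _ => hVopen.preimage (continuous_const_smul g))
  · simp only [mem_iInter₂]
    intro g hg
    have : g • x = x := by
      have : g ∈ MulAction.stabilizer G x := by rw [hstabG x]; exact hg
      exact this
    simpa [this] using hVmem
  · intro k hk
    have hsub : ∀ k ∈ K, k • (⋂ g ∈ (K : Set G), (g • ·) ⁻¹' V) ⊆
        ⋂ g ∈ (K : Set G), (g • ·) ⁻¹' V := by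
      intro k hk y hy
      obtain ⟨z, hz, rfl⟩ := hy
      simp only [mem_iInter₂, mem_preimage] at hz ⊢
      intro g hg
      rw [smul_smul]
      exact hz (g * k) (K.mul_mem hg hk)
    apply subset_antisymm (hsub k hk)
    intro y hy
    refine ⟨k⁻¹ • y, ?_, by simp⟩
    have := hsub k⁻¹ (K.inv_mem hk) ⟨y, hy, rfl⟩
    exact this
  · intro g hg
    have hU1 : (⋂ g ∈ (K : Set G), (g • ·) ⁻¹' V) ⊆ V := by
      intro y hy
      have := (mem_iInter₂.mp hy) 1 K.one_mem
      simpa using this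
    have := hVsep g hg
    apply Set.eq_empty_of_forall_notMem
    rintro y ⟨hy1, hy2⟩
    have : y ∈ (g • V) ∩ V := by
      refine ⟨?_, hU1 hy2⟩
      obtain ⟨z, hz, rfl⟩ := hy1
      exact ⟨z, hU1 hz, rfl⟩
    rw [hVsep g hg] at this
    exact this

variable {X : Type*} [TopologicalSpace X] [MeasurableSpace X] [BorelSpace X]
    {G : Type*} [Group G] [MulAction G X] [ContinuousConstSMul G X]

-- quotient map is measurable
theorem aux_mk_meas (r : Setoid X) : Measurable (Quotient.mk r) := fun _ hs => hs

theorem aux_mk_smul (g : G) (a : X) :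
    Quotient.mk (MulAction.orbitRel G X) (g • a) = Quotient.mk (MulAction.orbitRel G X) a :=
  Quotient.sound ((MulAction.orbitRel_apply).mpr ⟨g, rfl⟩)

theorem aux_preimage_inv (A : Set (Quotient (MulAction.orbitRel G X))) (g : G) :
    g • (Quotient.mk (MulAction.orbitRel G X) ⁻¹' A) =
      Quotient.mk (MulAction.orbitRel G X) ⁻¹' A := by
  ext a
  constructor
  · rintro ⟨b, hb, rfl⟩
    simpa [aux_mk_smul] using hb
  · intro ha
    exact ⟨g⁻¹ • a, by simpa [aux_mk_smul] using ha, by simp⟩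

set_option linter.unusedSectionVars false

-- H-orbit helpers
theorem aux_mk_smul_sub (H : Subgroup G) (h : H) (a : X) :
    Quotient.mk (MulAction.orbitRel H X) ((h : G) • a) =
      Quotient.mk (MulAction.orbitRel H X) a :=
  Quotient.sound ((MulAction.orbitRel_apply).mpr ⟨h, rfl⟩)

theorem aux_image_smul_sub (H : Subgroup G) {h : G} (hh : h ∈ H) (s : Set X) :
    Quotient.mk (MulAction.orbitRel H X) '' (h • s) =
      Quotient.mk (MulAction.orbitRel H X) '' s := by
  ext b
  constructor
  · rintro ⟨y, ⟨z, hz, rfl⟩, rfl⟩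
    exact ⟨z, hz, (aux_mk_smul_sub H ⟨h, hh⟩ z).symm⟩
  · rintro ⟨z, hz, rfl⟩
    exact ⟨h • z, ⟨z, hz, rfl⟩, aux_mk_smul_sub H ⟨h, hh⟩ z⟩

theorem aux_preimage_image_sub (H : Subgroup G) (s : Set X) :
    Quotient.mk (MulAction.orbitRel H X) ⁻¹' (Quotient.mk (MulAction.orbitRel H X) '' s) =
      ⋃ h : H, (h : G) • s := by
  ext a
  simp only [mem_preimage, mem_image, mem_iUnion]
  constructor
  · rintro ⟨u, hu, hmk⟩
    obtain ⟨h, rfl⟩ := (MulAction.orbitRel_apply).mp (Quotient.exact hmk.symm)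
    -- a = h • u with h : H
    exact ⟨h, u, hu, rfl⟩
  · rintro ⟨h, u, hu, rfl⟩
    exact ⟨u, hu, (aux_mk_smul_sub H h u).symm⟩

open MulAction in
theorem aux_local
    (H : Subgroup G) (K : Subgroup G) (hKnormal : K.Normal) (hKfin : (K : Set G).Finite)
    (hHK : H ⊓ K = ⊥)
    (μ : Measure X) [SMulInvariantMeasure G X μ]
    (νH : Measure (Quotient (MulAction.orbitRel H X)))
    (νG : Measure (Quotient (MulAction.orbitRel G X)))
    (hνH : ∀ (U : Set X) (Γ : Subgroup H), IsOpen U → (Γ : Set H).Finite →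
      (∀ g ∈ Γ, g • U = U) → (∀ g : H, g ∉ Γ → (g • U) ∩ U = ∅) →
      νH.restrict (Quotient.mk (MulAction.orbitRel H X) '' U) =
        (Nat.card Γ : ENNReal)⁻¹ • (μ.restrict U).map (Quotient.mk (MulAction.orbitRel H X)))
    (hνG : ∀ (U : Set X) (Γ : Subgroup G), IsOpen U → (Γ : Set G).Finite →
      (∀ g ∈ Γ, g • U = U) → (∀ g : G, g ∉ Γ → (g • U) ∩ U = ∅) →
      νG.restrict (Quotient.mk (MulAction.orbitRel G X) '' U) =
        (Nat.card Γ : ENNReal)⁻¹ • (μ.restrict U).map (Quotient.mk (MulAction.orbitRel G X)))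
    (p : Quotient (MulAction.orbitRel H X) → Quotient (MulAction.orbitRel G X))
    (hp : ∀ x : X, p (Quotient.mk (MulAction.orbitRel H X) x) =
      Quotient.mk (MulAction.orbitRel G X) x)
    [Finite (G ⧸ (H ⊔ K))]
    (U : Set X) (hUopen : IsOpen U)
    (hUKinv : ∀ g ∈ K, g • U = U) (hUsep : ∀ g : G, g ∉ K → (g • U) ∩ U = ∅) :
    (Measure.map p νH).restrict
        (Quotient.mk (MulAction.orbitRel G X) '' U) =
      (((H ⊔ K).index * Nat.card K : ℕ) • νG).restrict
        (Quotient.mk (MulAction.orbitRel G X) '' U) := by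
  classical
  set πH := Quotient.mk (MulAction.orbitRel H X) with hπH
  set πG := Quotient.mk (MulAction.orbitRel G X) with hπG
  have hπHmeas : Measurable πH := fun _ hs => hs
  have hπGmeas : Measurable πG := fun _ hs => hs
  have hpmeas : Measurable p := by
    intro s hs
    have : πH ⁻¹' (p ⁻¹' s) = πG ⁻¹' s := by
      ext a; simp [hp a]
    show MeasurableSet (Quotient.mk'' ⁻¹' (p ⁻¹' s))
    show MeasurableSet (πH ⁻¹' (p ⁻¹' s))
    rw [this]
    exact hπGmeas hs
  have hppre : ∀ A : Set (Quotient (MulAction.orbitRel G X)), πH ⁻¹' (p ⁻¹' A) = πG ⁻¹' A := by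
    intro A; ext a; simp [hp a]
  have hπGsmul : ∀ (g : G) (a : X), πG (g • a) = πG a := fun g a => aux_mk_smul g a
  set V := πG '' U with hV
  set S := H ⊔ K with hS
  -- V is measurable
  have hVpre : πG ⁻¹' V = ⋃ g : G, g • U := by
    ext a
    simp only [mem_preimage, hV, mem_image, mem_iUnion]
    constructor
    · rintro ⟨u, hu, hmk⟩
      obtain ⟨g, rfl⟩ := (MulAction.orbitRel_apply).mp (Quotient.exact hmk.symm)
      exact ⟨g, u, hu, rfl⟩
    · rintro ⟨g, u, hu, rfl⟩
      exact ⟨u, hu, (aux_mk_smul g u).symm⟩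
  have hVmeas : MeasurableSet V := by
    show MeasurableSet (Quotient.mk'' ⁻¹' V)
    show MeasurableSet (πG ⁻¹' V)
    rw [hVpre]
    exact (isOpen_iUnion (fun g => hUopen.smul g)).measurableSet
  -- translates
  set T : G → Set (Quotient (MulAction.orbitRel H X)) := fun g => πH '' (g • U) with hT
  have hTmeas : ∀ g, MeasurableSet (T g) := by
    intro g
    show MeasurableSet (Quotient.mk'' ⁻¹' T g)
    show MeasurableSet (πH ⁻¹' (πH '' (g • U)))
    rw [aux_preimage_image_sub]
    exact (isOpen_iUnion (fun h => (hUopen.smul g).smul _)).measurableSet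
  -- well-definedness on cosets
  have hTwd : ∀ g g' : G, g⁻¹ * g' ∈ S → T g'⁻¹ = T g⁻¹ := by
    intro g g' hgg
    have : (g⁻¹ * g') ∈ ((H : Set G) * (K : Set G)) := by
      rw [← Subgroup.mul_normal H K]; exact hgg
    obtain ⟨h, hh, k, hk, hhk⟩ := this
    have hhk' : h * k = g⁻¹ * g' := hhk
    -- g' = g * h * k
    have hg' : g' = g * (h * k) := by
      rw [hhk']; group
    set k3 : G := g * (h * k⁻¹ * h⁻¹) * g⁻¹ with hk3
    have hk3K : k3 ∈ K := hKnormal.conj_mem _ (hKnormal.conj_mem _ (K.inv_mem hk) h) g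
    have hinv : g'⁻¹ = h⁻¹ * (g⁻¹ * k3) := by
      rw [hg', hk3]; group
    have hsmul : g'⁻¹ • U = h⁻¹ • (g⁻¹ • (k3 • U)) := by
      rw [hinv, mul_smul, mul_smul]
    rw [hT]
    simp only
    rw [hsmul, hUKinv k3 hk3K, aux_image_smul_sub H (H.inv_mem hh)]
  -- disjointness
  have hTdisj : ∀ g g' : G, g⁻¹ * g' ∉ S → Disjoint (T g⁻¹) (T g'⁻¹) := by
    intro g g' hgg
    rw [Set.disjoint_left]
    rintro b hb hb'
    obtain ⟨u, hu, hbu⟩ := hb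
    obtain ⟨u', hu', hbu'⟩ := hb'
    have hrel := Quotient.exact (hbu'.trans hbu.symm)
    obtain ⟨hh, hhe⟩ := MulAction.orbitRel_apply.mp hrel
    have hhe' : (hh : G) • u = u' := hhe
    obtain ⟨v, hv, hve⟩ := hu
    have hve' : g⁻¹ • v = u := hve
    obtain ⟨v', hv', hve2⟩ := hu'
    have hve2' : g'⁻¹ • v' = u' := hve2
    have hc : (g' * (hh : G) * g⁻¹) • v = v' := by
      have : g' • ((hh : G) • (g⁻¹ • v)) = v' := by
        rw [hve', hhe', ← hve2']; simp
      rw [← this, mul_smul, mul_smul]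
    have hcK : (g' * (hh : G) * g⁻¹) ∈ K := by
      by_contra hnot
      have hmem : v' ∈ ((g' * (hh : G) * g⁻¹) • U) ∩ U := ⟨⟨v, hv, hc⟩, hv'⟩
      rw [hUsep _ hnot] at hmem
      exact hmem
    apply hgg
    have h1 : g'⁻¹ * (g' * (hh : G) * g⁻¹) * g' ∈ K := hKnormal.conj_mem' _ hcK g'
    have h2 : (hh : G) * (g⁻¹ * g') ∈ K := by
      convert h1 using 1; group
    have h3 : g⁻¹ * g' = ((hh : G))⁻¹ * ((hh : G) * (g⁻¹ * g')) := by group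
    rw [h3]
    exact S.mul_mem (S.inv_mem (Subgroup.mem_sup_left hh.2)) (Subgroup.mem_sup_right h2)
  -- family indexed by G ⧸ S
  set W : G ⧸ S → Set (Quotient (MulAction.orbitRel H X)) := fun q => T (q.out)⁻¹ with hW
  have hWT : ∀ g : G, W (QuotientGroup.mk g) = T g⁻¹ := by
    intro g
    apply hTwd
    have h1 : (QuotientGroup.mk ((QuotientGroup.mk g : G ⧸ S).out) : G ⧸ S)
        = QuotientGroup.mk g := QuotientGroup.out_eq' _
    exact (QuotientGroup.eq).mp h1.symm
  have hWcover : p ⁻¹' V = ⋃ q : G ⧸ S, W q := by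
    ext b
    obtain ⟨a, rfl⟩ := b.exists_rep
    simp only [mem_preimage, mem_iUnion]
    constructor
    · intro hmem
      have hmem' : πG a ∈ V := by rw [← hp a]; exact hmem
      obtain ⟨u, hu, hmk⟩ := hmem'
      obtain ⟨g, hge⟩ := MulAction.orbitRel_apply.mp (Quotient.exact hmk)
      have hge' : g • a = u := hge
      refine ⟨QuotientGroup.mk g, ?_⟩
      rw [hWT g]
      exact ⟨a, ⟨u, hu, by rw [← hge']; simp⟩, rfl⟩
    · rintro ⟨q, hq⟩
      obtain ⟨u, hu, hmk⟩ := hq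
      obtain ⟨v, hv, hvu⟩ := hu
      have hvu' : (q.out)⁻¹ • v = u := hvu
      have h2 : πG u = πG v := by rw [← hvu']; exact hπGsmul _ v
      rw [← hmk, hp u, h2]
      exact ⟨v, hv, rfl⟩
  have hWdisj : Pairwise (Function.onFun Disjoint W) := by
    intro q q' hne
    obtain ⟨g, rfl⟩ := QuotientGroup.mk_surjective q
    obtain ⟨g', rfl⟩ := QuotientGroup.mk_surjective q'
    rw [Function.onFun, hWT g, hWT g']
    apply hTdisj
    intro hmem
    exact hne ((QuotientGroup.eq).mpr hmem)
  -- value computation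
  have hbotfin : (((⊥ : Subgroup H) : Set H)).Finite := by
    rw [Subgroup.coe_bot]; exact Set.finite_singleton 1
  have hrestr : ∀ g : G, νH.restrict (T g) = (μ.restrict (g • U)).map πH := by
    intro g
    have hinv : ∀ γ ∈ (⊥ : Subgroup H), γ • (g • U) = g • U := by
      intro γ hγ
      rw [Subgroup.mem_bot] at hγ
      subst hγ
      exact one_smul _ _
    have hsep : ∀ γ : H, γ ∉ (⊥ : Subgroup H) → (γ • (g • U)) ∩ (g • U) = ∅ := by
      intro γ hγ
      rw [Subgroup.mem_bot] at hγ
      apply Set.eq_empty_of_forall_notMem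
      rintro y ⟨hy1, hy2⟩
      obtain ⟨z, hz, hze⟩ := hy1
      have hze' : (γ : G) • z = y := hze
      obtain ⟨w, hw, hwe⟩ := hz
      have hwe' : g • w = z := hwe
      obtain ⟨w', hw', hwe2⟩ := hy2
      have hwe2' : g • w' = y := hwe2
      have hc : (g⁻¹ * (γ : G) * g) • w = w' := by
        rw [mul_smul, mul_smul, hwe', hze', ← hwe2', inv_smul_smul]
      have hcK : (g⁻¹ * (γ : G) * g) ∈ K := by
        by_contra hnot
        have hmem2 : w' ∈ ((g⁻¹ * (γ : G) * g) • U) ∩ U := ⟨⟨w, hw, hc⟩, hw'⟩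
        rw [hUsep _ hnot] at hmem2
        exact hmem2
      have hγK : (γ : G) ∈ K := by
        have := hKnormal.conj_mem _ hcK g
        convert this using 1; group
      have : (γ : G) ∈ H ⊓ K := ⟨γ.2, hγK⟩
      rw [hHK, Subgroup.mem_bot] at this
      exact hγ (by ext; exact this)
    have := hνH (g • U) ⊥ (hUopen.smul g) hbotfin hinv hsep
    rw [this, Subgroup.card_bot]
    simp
  have hval : ∀ (g : G) (A : Set (Quotient (MulAction.orbitRel G X))), MeasurableSet A →
      νH (p ⁻¹' A ∩ T g) = μ (πG ⁻¹' A ∩ U) := by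
    intro g A hA
    have h1 : νH (p ⁻¹' A ∩ T g) = νH.restrict (T g) (p ⁻¹' A) :=
      (Measure.restrict_apply (hpmeas hA)).symm
    rw [h1, hrestr g, Measure.map_apply hπHmeas (hpmeas hA), hppre,
      Measure.restrict_apply (hπGmeas hA)]
    have h2 : πG ⁻¹' A ∩ g • U = g • (πG ⁻¹' A ∩ U) := by
      rw [smul_set_inter, aux_preimage_inv A g]
    rw [h2, measure_smul]
  -- assemble
  haveI : Fintype (G ⧸ S) := Fintype.ofFinite _
  ext A hA
  rw [Measure.restrict_apply hA, Measure.restrict_apply hA,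
    Measure.map_apply hpmeas (hA.inter hVmeas), Set.preimage_inter, hWcover,
    Set.inter_iUnion,
    measure_iUnion
      (fun q q' h => ((hWdisj h).mono inter_subset_right inter_subset_right))
      (fun q => (hpmeas hA).inter (hTmeas _))]
  have hterm : ∀ q : G ⧸ S, νH (p ⁻¹' A ∩ W q) = μ (πG ⁻¹' A ∩ U) :=
    fun q => hval _ A hA
  rw [tsum_congr hterm, tsum_fintype, Finset.sum_const, Finset.card_univ]
  have hGcard : Fintype.card (G ⧸ S) = S.index := by
    rw [Subgroup.index_eq_card, Nat.card_eq_fintype_card]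
  -- RHS
  have hres := hνG U K hUopen hKfin hUKinv hUsep
  have hVA : νG (A ∩ V) = (Nat.card K : ENNReal)⁻¹ * μ (πG ⁻¹' A ∩ U) := by
    have : νG (A ∩ V) = νG.restrict V A := (Measure.restrict_apply hA).symm
    rw [this, hres, Measure.smul_apply, Measure.map_apply hπGmeas hA,
      Measure.restrict_apply (hπGmeas hA), smul_eq_mul]
  rw [Measure.smul_apply, hVA, hGcard]
  have hKcard0 : (Nat.card K : ENNReal) ≠ 0 := by
    haveI : Finite K := hKfin.to_subtype
    simp [Nat.card_pos.ne']
  have hKcardtop : (Nat.card K : ENNReal) ≠ ⊤ := ENNReal.natCast_ne_top _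
  simp only [nsmul_eq_mul]
  rw [Nat.cast_mul, mul_assoc, ← mul_assoc ((Nat.card K : ENNReal)),
    ENNReal.mul_inv_cancel hKcard0 hKcardtop, one_mul]

end Aux

/-- Let `G` act properly discontinuously by homeomorphisms on a locally
compact, Hausdorff, second countable space `X`. Let `H ≤ G` have finite index, let `K` be a
finite normal subgroup of `G`, and suppose `Stab_G(x) = K` and `Stab_H(x) = {1}` for all
`x ∈ X`. If `μ` is a locally finite `G`-invariant Borel measure on `X`, `νH` and `νG` are its
local pushforwards on `X/H` and `X/G`, and `p : X/H → X/G` is the natural projection, then the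
ordinary pushforward of `νH` under `p` equals `[G:H] · νG`. -/
theorem stmt_15 {X : Type*} [TopologicalSpace X] [LocallyCompactSpace X] [T2Space X]
    [SecondCountableTopology X] [MeasurableSpace X] [BorelSpace X]
    {G : Type*} [Group G] [MulAction G X] [ContinuousConstSMul G X]
    (hpd : ∀ K L : Set X, IsCompact K → IsCompact L →
      {g : G | ((g • K) ∩ L).Nonempty}.Finite)
    (H : Subgroup G) (hHfin : H.index ≠ 0)
    (K : Subgroup G) (hKnormal : K.Normal) (hKfin : (K : Set G).Finite)
    (hstabG : ∀ x : X, MulAction.stabilizer G x = K)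
    (hstabH : ∀ x : X, MulAction.stabilizer H x = ⊥)
    (μ : Measure X) [IsLocallyFiniteMeasure μ] [SMulInvariantMeasure G X μ]
    (νH : Measure (Quotient (MulAction.orbitRel H X)))
    (νG : Measure (Quotient (MulAction.orbitRel G X)))
    (hνH : IsLocalPushforward (G := H) μ νH)
    (hνG : IsLocalPushforward (G := G) μ νG)
    (p : Quotient (MulAction.orbitRel H X) → Quotient (MulAction.orbitRel G X))
    (hp : ∀ x : X, p (Quotient.mk (MulAction.orbitRel H X) x) =
      Quotient.mk (MulAction.orbitRel G X) x) :
    Measure.map p νH = (H.index : ENNReal) • νG := by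

  classical
  by_cases hX : Nonempty X
  · obtain ⟨x0⟩ := hX
    have hHK : H ⊓ K = ⊥ := by
      rw [eq_bot_iff]
      rintro g ⟨hgH, hgK⟩
      have hfix : g • x0 = x0 := by
        have : g ∈ MulAction.stabilizer G x0 := by rw [hstabG x0]; exact hgK
        exact this
      have hmem : (⟨g, hgH⟩ : H) ∈ MulAction.stabilizer H x0 := by
        show (⟨g, hgH⟩ : H) • x0 = x0
        exact hfix
      rw [hstabH x0, Subgroup.mem_bot] at hmem
      rw [Subgroup.mem_bot]
      exact Subtype.ext_iff.mp hmem
    haveI := hKnormal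
    haveI : H.FiniteIndex := ⟨hHfin⟩
    haveI : (H ⊔ K).FiniteIndex := Subgroup.finiteIndex_of_le le_sup_left
    have hidx : (H ⊔ K).index * Nat.card K = H.index := by
      rw [mul_comm]; exact aux_index H K hHK
    choose Uf hUopen hUmem hUKinv hUsep using fun x => aux_slice hpd K hKfin hstabG x
    obtain ⟨t, htc, htU⟩ := TopologicalSpace.countable_cover_nhds
      (f := Uf) (fun x => (hUopen x).mem_nhds (hUmem x))
    set πG := Quotient.mk (MulAction.orbitRel G X) with hπG
    have hcover : ⋃ x ∈ t, πG '' (Uf x) = Set.univ := by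
      rw [← Set.image_iUnion₂, htU, Set.image_univ]
      apply Set.eq_univ_of_forall
      intro q
      obtain ⟨a, rfl⟩ := q.exists_rep
      exact ⟨a, rfl⟩
    have hkey : ∀ x ∈ t, (Measure.map p νH).restrict (πG '' Uf x) =
        ((H.index : ENNReal) • νG).restrict (πG '' Uf x) := by
      intro x _
      have hloc := aux_local H K hKnormal hKfin hHK μ νH νG hνH.2 hνG.2 p hp
        (Uf x) (hUopen x) (hUKinv x) (hUsep x)
      rw [hloc, hidx, Nat.cast_smul_eq_nsmul ENNReal H.index νG]
    calc Measure.map p νH = (Measure.map p νH).restrict Set.univ :=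
          (Measure.restrict_univ).symm
      _ = (Measure.map p νH).restrict (⋃ x ∈ t, πG '' Uf x) := by rw [hcover]
      _ = ((H.index : ENNReal) • νG).restrict (⋃ x ∈ t, πG '' Uf x) :=
          (Measure.restrict_biUnion_congr htc).mpr hkey
      _ = ((H.index : ENNReal) • νG).restrict Set.univ := by rw [hcover]
      _ = (H.index : ENNReal) • νG := Measure.restrict_univ
  · have hE : IsEmpty X := not_nonempty_iff.mp hX
    haveI : IsEmpty (Quotient (MulAction.orbitRel H X)) :=
      ⟨fun q => q.exists_rep.elim fun a _ => hE.false a⟩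
    haveI : IsEmpty (Quotient (MulAction.orbitRel G X)) :=
      ⟨fun q => q.exists_rep.elim fun a _ => hE.false a⟩
    rw [νH.eq_zero_of_isEmpty, νG.eq_zero_of_isEmpty]
    simp
end
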